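/- arXiv:2308.05631 — 5 statements merged into one kernel-verified Lean document; each statement's English description precedes it below -/
import Mathlib

section
/- For every λ ≥ 2, the sum over integers j, k ≥ 0 of min{(λ 2^{-k})^{-1/2} · 2^{-j/2}, (λ 2^{-j})^{-1/2}, 2^{-j/2} · 2^{-k/2}} is bounded above by C λ^{-3/8} for an absolute constant C > 0. -/
open Real Finset

noncomputable section DyadicAux

private def qq : ℝ := (2 : ℝ) ^ (-(1:ℝ)/2)
private def ss : ℝ := (2 : ℝ) ^ ((1:ℝ)/2)

private lemma qq_pos : 0 < qq := Real.rpow_pos_of_pos two_pos _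
private lemma qq_lt_one : qq < 1 :=
  Real.rpow_lt_one_of_one_lt_of_neg one_lt_two (by norm_num)
private lemma ss_pos : 0 < ss := Real.rpow_pos_of_pos two_pos _
private lemma one_lt_ss : 1 < ss :=
  (Real.one_lt_rpow_iff_of_pos two_pos).mpr (Or.inl ⟨one_lt_two, by norm_num⟩)

private lemma ss_mul_qq : ss * qq = 1 := by
  rw [qq, ss, ← Real.rpow_add two_pos]; norm_num

private lemma ss_pow (n : ℕ) : ss ^ n = (2 : ℝ) ^ ((n : ℝ)/2) := by
  rw [ss, ← Real.rpow_natCast ((2:ℝ) ^ ((1:ℝ)/2)) n, ← Real.rpow_mul (by norm_num)]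
  congr 1; ring

private lemma qq_pow (n : ℕ) : qq ^ n = (2 : ℝ) ^ (-(n : ℝ)/2) := by
  rw [qq, ← Real.rpow_natCast ((2:ℝ) ^ (-(1:ℝ)/2)) n, ← Real.rpow_mul (by norm_num)]
  congr 1; ring

private lemma ss_pow_mul_qq_pow (n : ℕ) : ss ^ n * qq ^ n = 1 := by
  rw [← mul_pow, ss_mul_qq, one_pow]

/-- the summand, in convenient form -/
private def mm (L : ℝ) (j k : ℕ) : ℝ :=
  min (min (L ^ (-(1:ℝ)/2) * ss ^ k * qq ^ j) (L ^ (-(1:ℝ)/2) * ss ^ j)) (qq ^ j * qq ^ k)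

private lemma mm_nonneg {L : ℝ} (hL : 0 ≤ L) (j k : ℕ) : 0 ≤ mm L j k := by
  have h1 : (0:ℝ) ≤ L ^ (-(1:ℝ)/2) := Real.rpow_nonneg hL _
  have h2 := qq_pos
  have h3 := ss_pos
  refine le_min (le_min ?_ ?_) ?_
  · exact mul_nonneg (mul_nonneg h1 (pow_nonneg h3.le _)) (pow_nonneg h2.le _)
  · exact mul_nonneg h1 (pow_nonneg h3.le _)
  · exact mul_nonneg (pow_nonneg h2.le _) (pow_nonneg h2.le _)

private lemma mm_le_A (L : ℝ) (j k : ℕ) : mm L j k ≤ L ^ (-(1:ℝ)/2) * ss ^ k * qq ^ j :=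
  le_trans (min_le_left _ _) (min_le_left _ _)

private lemma mm_le_B (L : ℝ) (j k : ℕ) : mm L j k ≤ L ^ (-(1:ℝ)/2) * ss ^ j :=
  le_trans (min_le_left _ _) (min_le_right _ _)

private lemma mm_le_C (L : ℝ) (j k : ℕ) : mm L j k ≤ qq ^ j * qq ^ k :=
  min_le_right _ _

private lemma summable_qq : Summable (fun k : ℕ => qq ^ k) :=
  summable_geometric_of_lt_one qq_pos.le qq_lt_one

private lemma tsum_qq : ∑' k : ℕ, qq ^ k = (1 - qq)⁻¹ :=
  tsum_geometric_of_lt_one qq_pos.le qq_lt_one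

private lemma summable_mm {L : ℝ} (hL : 0 ≤ L) (j : ℕ) : Summable (fun k => mm L j k) :=
  Summable.of_nonneg_of_le (mm_nonneg hL j) (mm_le_C L j) (summable_qq.mul_left _)

private lemma geom_sum_ss (n : ℕ) : ∑ k ∈ range n, ss ^ k ≤ ss ^ n * (ss - 1)⁻¹ := by
  rw [geom_sum_eq (ne_of_gt one_lt_ss)]
  have h : 0 < ss - 1 := by linarith [one_lt_ss]
  rw [div_eq_mul_inv]
  have h2 : ss ^ n - 1 ≤ ss ^ n := by linarith
  exact mul_le_mul_of_nonneg_right h2 (by positivity)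

private lemma summable_lin : Summable (fun n : ℕ => (n : ℝ) * qq ^ n) := by
  have := summable_pow_mul_geometric_of_norm_lt_one (R := ℝ) 1
    (r := qq) (by rw [Real.norm_eq_abs, abs_of_pos qq_pos]; exact qq_lt_one)
  simpa using this

private lemma tsum_lin : ∑' n : ℕ, (n : ℝ) * qq ^ n = qq / (1 - qq) ^ 2 :=
  tsum_coe_mul_geometric_of_norm_lt_one
    (by rw [Real.norm_eq_abs, abs_of_pos qq_pos]; exact qq_lt_one)

end DyadicAux

set_option maxHeartbeats 1000000 in
/-- Dyadic summation lemma: the double sum of the minimum of the three dyadic bounds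
is `O(λ^{-3/8})` uniformly for `λ ≥ 2`. -/
theorem stmt1 : ∃ C : ℝ, 0 < C ∧ ∀ L : ℝ, 2 ≤ L →
    (∑' j : ℕ, ∑' k : ℕ,
      min (min ((L * (2 : ℝ) ^ (-(k : ℝ))) ^ (-(1 : ℝ) / 2) * (2 : ℝ) ^ (-(j : ℝ) / 2))
            ((L * (2 : ℝ) ^ (-(j : ℝ))) ^ (-(1 : ℝ) / 2)))
          ((2 : ℝ) ^ (-(j : ℝ) / 2) * (2 : ℝ) ^ (-(k : ℝ) / 2)))
      ≤ C * L ^ (-(3 : ℝ) / 8) := by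
  have hq0 := qq_pos
  have hq1 := qq_lt_one
  have hs1 := one_lt_ss
  have hs0 := ss_pos
  have h1q : (0:ℝ) < 1 - qq := by linarith
  have hsm1 : (0:ℝ) < ss - 1 := by linarith
  set c0 : ℝ := (1 - qq)⁻¹ with hc0
  set c1 : ℝ := (ss - 1)⁻¹ with hc1
  have hc0pos : 0 < c0 := by positivity
  have hc1pos : 0 < c1 := by positivity
  set c4 : ℝ := (2:ℝ) ^ ((1:ℝ)/4) * (c1 + c0) with hc4
  set c5 : ℝ := c1 + c0 + 1 with hc5
  have hc5pos : 0 < c5 := by positivity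
  set c6 : ℝ := 4 * (qq / (1 - qq) ^ 2) + (4 + c5) * c0 with hc6
  have hc4pos : 0 < c4 := by positivity
  have hc6pos : 0 < c6 := by positivity
  refine ⟨c6 * (8:ℝ) ^ ((1:ℝ)/8) + c4 * c0 * (2:ℝ) ^ ((1:ℝ)/8), by positivity, ?_⟩
  intro L hL
  have hL0 : (0:ℝ) < L := by linarith
  have ha0 : (0:ℝ) < L ^ (-(1:ℝ)/2) := Real.rpow_pos_of_pos hL0 _
  -- rewrite the summand
  have hsummand : ∀ j k : ℕ,
      min (min ((L * (2 : ℝ) ^ (-(k : ℝ))) ^ (-(1 : ℝ) / 2) * (2 : ℝ) ^ (-(j : ℝ) / 2))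
            ((L * (2 : ℝ) ^ (-(j : ℝ))) ^ (-(1 : ℝ) / 2)))
          ((2 : ℝ) ^ (-(j : ℝ) / 2) * (2 : ℝ) ^ (-(k : ℝ) / 2)) = mm L j k := by
    intro j k
    have e1 : ∀ n : ℕ, (2:ℝ) ^ (-(n:ℝ)/2) = qq ^ n := fun n => (qq_pow n).symm
    have e2 : ∀ n : ℕ, (L * (2:ℝ) ^ (-(n:ℝ))) ^ (-(1:ℝ)/2)
        = L ^ (-(1:ℝ)/2) * ss ^ n := by
      intro n
      have e3 : ((2:ℝ) ^ (-(n:ℝ))) ^ (-(1:ℝ)/2) = ss ^ n := by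
        rw [← Real.rpow_mul (by norm_num : (0:ℝ) ≤ 2), ss_pow]
        congr 1; ring
      rw [Real.mul_rpow hL0.le (Real.rpow_nonneg (by norm_num) _), e3]
    rw [mm, e1, e1, e2, e2]
  -- the inner sums
  set T : ℕ → ℝ := fun j => ∑' k, mm L j k with hT
  have hT0 : ∀ j, 0 ≤ T j := fun j => tsum_nonneg (fun k => mm_nonneg hL0.le j k)
  have hTle : ∀ j, T j ≤ qq ^ j * c0 := by
    intro j
    calc T j ≤ ∑' k, qq ^ j * qq ^ k :=
          Summable.tsum_le_tsum (mm_le_C L j) (summable_mm hL0.le j) (summable_qq.mul_left _)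
      _ = qq ^ j * c0 := by rw [tsum_mul_left, tsum_qq]
  have hsummableT : Summable T :=
    Summable.of_nonneg_of_le hT0 hTle (summable_qq.mul_right c0)
  -- choose M with 2^M ≤ L < 2^(M+1)
  set M : ℕ := Nat.log 2 ⌊L⌋₊ with hM
  have hfloor2 : 2 ≤ ⌊L⌋₊ := Nat.le_floor (by exact_mod_cast hL)
  have hfloor0 : ⌊L⌋₊ ≠ 0 := by omega
  have h2ML : (2:ℝ) ^ M ≤ L := by
    calc ((2:ℝ) ^ M) = ((2 ^ M : ℕ) : ℝ) := by push_cast; ring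
      _ ≤ (⌊L⌋₊ : ℝ) := by exact_mod_cast Nat.pow_log_le_self 2 hfloor0
      _ ≤ L := Nat.floor_le hL0.le
  have hL2M : L < (2:ℝ) ^ (M + 1) := by
    calc L < (⌊L⌋₊ : ℝ) + 1 := Nat.lt_floor_add_one L
      _ ≤ (2:ℝ) ^ (M + 1) := by
          have h : ⌊L⌋₊ + 1 ≤ 2 ^ (M + 1) := Nat.lt_pow_succ_log_self one_lt_two _
          exact_mod_cast h
  set J : ℕ := (M + 3) / 4 with hJ
  set N : ℕ := (M + 1) / 2 with hN
  have hJ1 : M ≤ 4 * J := by omega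
  have hJ2 : 4 * J ≤ M + 3 := by omega
  have hN1 : M ≤ 2 * N := by omega
  have hN2 : 2 * N ≤ M + 1 := by omega
  have h2N_le : (2:ℝ) ^ (2 * N) ≤ 2 * L := by
    calc (2:ℝ) ^ (2 * N) ≤ (2:ℝ) ^ (M + 1) := pow_le_pow_right₀ one_le_two hN2
      _ = 2 * (2:ℝ) ^ M := by ring
      _ ≤ 2 * L := by linarith
  have h2N_ge : L / 2 ≤ (2:ℝ) ^ (2 * N) := by
    have h : L / 2 ≤ (2:ℝ) ^ M := by
      have h2 : (2:ℝ) ^ (M+1) = 2 * (2:ℝ) ^ M := by ring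
      nlinarith
    calc L / 2 ≤ (2:ℝ) ^ M := h
      _ ≤ (2:ℝ) ^ (2 * N) := pow_le_pow_right₀ one_le_two hN1
  -- ss^N ≤ (2L)^{1/4},  qq^N ≤ (L/2)^{-1/4}
  have hssN : ss ^ N ≤ (2 * L) ^ ((1:ℝ)/4) := by
    have h1 : ss ^ N = ((2:ℝ) ^ (2 * N)) ^ ((1:ℝ)/4) := by
      rw [ss_pow, ← Real.rpow_natCast (2:ℝ) (2 * N), ← Real.rpow_mul (by norm_num)]
      push_cast; ring_nf
    rw [h1]
    exact Real.rpow_le_rpow (by positivity) h2N_le (by norm_num)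
  have hqqN : qq ^ N ≤ (L / 2) ^ (-(1:ℝ)/4) := by
    have h1 : qq ^ N = ((2:ℝ) ^ (2 * N)) ^ (-(1:ℝ)/4) := by
      rw [qq_pow, ← Real.rpow_natCast (2:ℝ) (2 * N), ← Real.rpow_mul (by norm_num)]
      push_cast; ring_nf
    rw [h1]
    exact Real.rpow_le_rpow_of_nonpos (by positivity) h2N_ge (by norm_num)
  -- uniform bound: T j ≤ c4 * L^{-1/4} * qq^j
  have hTj : ∀ j, T j ≤ c4 * L ^ (-(1:ℝ)/4) * qq ^ j := by
    intro j
    have hsplit := Summable.sum_add_tsum_nat_add (f := fun k => mm L j k) N (summable_mm hL0.le j)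
    have hhead : ∑ k ∈ range N, mm L j k ≤ L ^ (-(1:ℝ)/2) * qq ^ j * (ss ^ N * c1) := by
      calc ∑ k ∈ range N, mm L j k
          ≤ ∑ k ∈ range N, L ^ (-(1:ℝ)/2) * ss ^ k * qq ^ j :=
            Finset.sum_le_sum (fun k _ => mm_le_A L j k)
        _ = L ^ (-(1:ℝ)/2) * qq ^ j * ∑ k ∈ range N, ss ^ k := by
            rw [Finset.mul_sum]; exact Finset.sum_congr rfl (fun k _ => by ring)
        _ ≤ L ^ (-(1:ℝ)/2) * qq ^ j * (ss ^ N * c1) :=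
            mul_le_mul_of_nonneg_left (geom_sum_ss N) (by positivity)
    have htail : ∑' k, mm L j (k + N) ≤ qq ^ j * qq ^ N * c0 := by
      calc ∑' k, mm L j (k + N) ≤ ∑' k : ℕ, (qq ^ j * qq ^ N) * qq ^ k := by
            apply Summable.tsum_le_tsum _ ((summable_mm hL0.le j).comp_injective (add_left_injective N))
              (summable_qq.mul_left _)
            intro k
            calc mm L j (k + N) ≤ qq ^ j * qq ^ (k + N) := mm_le_C L j (k + N)
              _ = (qq ^ j * qq ^ N) * qq ^ k := by rw [pow_add]; ring
        _ = qq ^ j * qq ^ N * c0 := by rw [tsum_mul_left, tsum_qq]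
    have e1 : L ^ (-(1:ℝ)/2) * ss ^ N ≤ (2:ℝ) ^ ((1:ℝ)/4) * L ^ (-(1:ℝ)/4) := by
      calc L ^ (-(1:ℝ)/2) * ss ^ N ≤ L ^ (-(1:ℝ)/2) * (2 * L) ^ ((1:ℝ)/4) :=
            mul_le_mul_of_nonneg_left hssN ha0.le
        _ = (2:ℝ) ^ ((1:ℝ)/4) * (L ^ (-(1:ℝ)/2) * L ^ ((1:ℝ)/4)) := by
            rw [Real.mul_rpow (by norm_num) hL0.le]; ring
        _ = (2:ℝ) ^ ((1:ℝ)/4) * L ^ (-(1:ℝ)/4) := by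
            rw [← Real.rpow_add hL0]; norm_num
    have e2 : qq ^ N ≤ (2:ℝ) ^ ((1:ℝ)/4) * L ^ (-(1:ℝ)/4) := by
      calc qq ^ N ≤ (L / 2) ^ (-(1:ℝ)/4) := hqqN
        _ = L ^ (-(1:ℝ)/4) / (2:ℝ) ^ (-(1:ℝ)/4) := Real.div_rpow hL0.le (by norm_num) _
        _ = (2:ℝ) ^ ((1:ℝ)/4) * L ^ (-(1:ℝ)/4) := by
            rw [div_eq_mul_inv, ← Real.rpow_neg (by norm_num)]; norm_num; ring
    have hq0j : (0:ℝ) ≤ qq ^ j := by positivity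
    calc T j = ∑ k ∈ range N, mm L j k + ∑' k, mm L j (k + N) := hsplit.symm
      _ ≤ L ^ (-(1:ℝ)/2) * qq ^ j * (ss ^ N * c1) + qq ^ j * qq ^ N * c0 :=
          add_le_add hhead htail
      _ = (L ^ (-(1:ℝ)/2) * ss ^ N) * c1 * qq ^ j + qq ^ N * c0 * qq ^ j := by ring
      _ ≤ ((2:ℝ) ^ ((1:ℝ)/4) * L ^ (-(1:ℝ)/4)) * c1 * qq ^ j
          + ((2:ℝ) ^ ((1:ℝ)/4) * L ^ (-(1:ℝ)/4)) * c0 * qq ^ j :=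
          add_le_add
            (mul_le_mul_of_nonneg_right (mul_le_mul_of_nonneg_right e1 hc1pos.le) hq0j)
            (mul_le_mul_of_nonneg_right (mul_le_mul_of_nonneg_right e2 hc0pos.le) hq0j)
      _ = c4 * L ^ (-(1:ℝ)/4) * qq ^ j := by rw [hc4]; ring
  -- key bound for small j
  have hqqM1 : qq ^ (M + 1) ≤ L ^ (-(1:ℝ)/2) := by
    have h1 : qq ^ (M + 1) = ((2:ℝ) ^ (M + 1)) ^ (-(1:ℝ)/2) := by
      rw [qq_pow, ← Real.rpow_natCast (2:ℝ) (M + 1), ← Real.rpow_mul (by norm_num)]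
      push_cast; ring_nf
    rw [h1]
    exact Real.rpow_le_rpow_of_nonpos hL0 hL2M.le (by norm_num)
  have hHeadj : ∀ j, j < J →
      T j ≤ L ^ (-(1:ℝ)/2) * ss ^ j * (((M - 4 * j : ℕ) : ℝ) + c5) := by
    intro j hj
    have h4j : 4 * j + 1 ≤ M := by omega
    set K : ℕ := M - 2 * j with hK
    have hKsplit : K + 1 = 2 * j + ((M - 4 * j) + 1) := by omega
    have hsplit := Summable.sum_add_tsum_nat_add (f := fun k => mm L j k) (K + 1) (summable_mm hL0.le j)
    have hheadsum : ∑ k ∈ range (K + 1), mm L j k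
        ≤ L ^ (-(1:ℝ)/2) * ss ^ j * c1
          + (((M - 4 * j : ℕ) : ℝ) + 1) * (L ^ (-(1:ℝ)/2) * ss ^ j) := by
      rw [hKsplit, Finset.sum_range_add]
      apply add_le_add
      · calc ∑ k ∈ range (2 * j), mm L j k
            ≤ ∑ k ∈ range (2 * j), L ^ (-(1:ℝ)/2) * ss ^ k * qq ^ j :=
              Finset.sum_le_sum (fun k _ => mm_le_A L j k)
          _ = L ^ (-(1:ℝ)/2) * qq ^ j * ∑ k ∈ range (2 * j), ss ^ k := by
              rw [Finset.mul_sum]; exact Finset.sum_congr rfl (fun k _ => by ring)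
          _ ≤ L ^ (-(1:ℝ)/2) * qq ^ j * (ss ^ (2 * j) * c1) :=
              mul_le_mul_of_nonneg_left (geom_sum_ss _) (by positivity)
          _ = L ^ (-(1:ℝ)/2) * ss ^ j * c1 * (ss ^ j * qq ^ j) := by
              rw [two_mul, pow_add]; ring
          _ = L ^ (-(1:ℝ)/2) * ss ^ j * c1 := by rw [ss_pow_mul_qq_pow]; ring
      · calc ∑ k ∈ range ((M - 4 * j) + 1), mm L j (2 * j + k)
            ≤ ∑ _k ∈ range ((M - 4 * j) + 1), L ^ (-(1:ℝ)/2) * ss ^ j :=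
              Finset.sum_le_sum (fun k _ => mm_le_B L j (2 * j + k))
          _ = (((M - 4 * j : ℕ) : ℝ) + 1) * (L ^ (-(1:ℝ)/2) * ss ^ j) := by
              rw [Finset.sum_const, Finset.card_range]; push_cast; ring
    have hkey : qq ^ j * qq ^ (K + 1) = qq ^ (M + 1) * ss ^ j := by
      have hqjne : qq ^ j ≠ 0 := pow_ne_zero j (ne_of_gt qq_pos)
      apply mul_right_cancel₀ hqjne
      calc qq ^ j * qq ^ (K + 1) * qq ^ j = qq ^ (j + (K + 1) + j) := by
            rw [← pow_add, ← pow_add]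
        _ = qq ^ (M + 1) := by congr 1; omega
        _ = qq ^ (M + 1) * ss ^ j * qq ^ j := by
            rw [mul_assoc, ss_pow_mul_qq_pow, mul_one]
    have htailsum : ∑' k, mm L j (k + (K + 1)) ≤ L ^ (-(1:ℝ)/2) * ss ^ j * c0 := by
      calc ∑' k, mm L j (k + (K + 1)) ≤ ∑' k : ℕ, (qq ^ j * qq ^ (K + 1)) * qq ^ k := by
            apply Summable.tsum_le_tsum _ ((summable_mm hL0.le j).comp_injective (add_left_injective _))
              (summable_qq.mul_left _)
            intro k
            calc mm L j (k + (K + 1)) ≤ qq ^ j * qq ^ (k + (K + 1)) := mm_le_C L j _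
              _ = (qq ^ j * qq ^ (K + 1)) * qq ^ k := by rw [pow_add]; ring
        _ = (qq ^ j * qq ^ (K + 1)) * c0 := by rw [tsum_mul_left, tsum_qq]
        _ = qq ^ (M + 1) * ss ^ j * c0 := by rw [hkey]
        _ ≤ L ^ (-(1:ℝ)/2) * ss ^ j * c0 := by
            have : (0:ℝ) ≤ ss ^ j * c0 := by positivity
            calc qq ^ (M + 1) * ss ^ j * c0 = qq ^ (M + 1) * (ss ^ j * c0) := by ring
              _ ≤ L ^ (-(1:ℝ)/2) * (ss ^ j * c0) :=
                  mul_le_mul_of_nonneg_right hqqM1 this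
              _ = L ^ (-(1:ℝ)/2) * ss ^ j * c0 := by ring
    calc T j = ∑ k ∈ range (K + 1), mm L j k + ∑' k, mm L j (k + (K + 1)) := hsplit.symm
      _ ≤ (L ^ (-(1:ℝ)/2) * ss ^ j * c1
            + (((M - 4 * j : ℕ) : ℝ) + 1) * (L ^ (-(1:ℝ)/2) * ss ^ j))
          + L ^ (-(1:ℝ)/2) * ss ^ j * c0 := add_le_add hheadsum htailsum
      _ = L ^ (-(1:ℝ)/2) * ss ^ j * (((M - 4 * j : ℕ) : ℝ) + (c1 + c0 + 1)) := by ring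
      _ = L ^ (-(1:ℝ)/2) * ss ^ j * (((M - 4 * j : ℕ) : ℝ) + c5) := by rw [hc5]
  -- summing the head
  have summable_g : Summable (fun n : ℕ => 4 * ((n:ℝ) * qq ^ n) + (4 + c5) * qq ^ n) :=
    ((summable_lin.mul_left 4).add (summable_qq.mul_left (4 + c5)))
  have tsum_g : ∑' n : ℕ, (4 * ((n:ℝ) * qq ^ n) + (4 + c5) * qq ^ n) = c6 := by
    rw [Summable.tsum_add (summable_lin.mul_left 4) (summable_qq.mul_left (4 + c5)),
      tsum_mul_left, tsum_mul_left, tsum_lin, tsum_qq, hc6]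
  have hHead : ∑ j ∈ range J, T j ≤ L ^ (-(1:ℝ)/2) * ss ^ J * c6 := by
    have step1 : ∑ j ∈ range J, T j
        ≤ ∑ j ∈ range J, L ^ (-(1:ℝ)/2) * (ss ^ j * (4 * ((J - j : ℕ) : ℝ) + c5)) := by
      apply Finset.sum_le_sum
      intro j hj
      rw [Finset.mem_range] at hj
      have h1 := hHeadj j hj
      have h2 : ((M - 4 * j : ℕ) : ℝ) ≤ 4 * ((J - j : ℕ) : ℝ) := by
        have : (M - 4 * j : ℕ) ≤ 4 * (J - j) := by omega
        exact_mod_cast this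
      calc T j ≤ L ^ (-(1:ℝ)/2) * ss ^ j * (((M - 4 * j : ℕ) : ℝ) + c5) := h1
        _ ≤ L ^ (-(1:ℝ)/2) * ss ^ j * (4 * ((J - j : ℕ) : ℝ) + c5) := by
            apply mul_le_mul_of_nonneg_left (by linarith) (by positivity)
        _ = L ^ (-(1:ℝ)/2) * (ss ^ j * (4 * ((J - j : ℕ) : ℝ) + c5)) := by ring
    have step2 : ∑ j ∈ range J, ss ^ j * (4 * ((J - j : ℕ) : ℝ) + c5)
        ≤ ss ^ J * c6 := by
      rw [← Finset.sum_range_reflect]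
      have step2a : ∀ i ∈ range J,
          ss ^ (J - 1 - i) * (4 * ((J - (J - 1 - i) : ℕ) : ℝ) + c5)
            ≤ ss ^ J * (4 * ((i:ℝ) * qq ^ i) + (4 + c5) * qq ^ i) := by
        intro i hi
        rw [Finset.mem_range] at hi
        have hJi : J - (J - 1 - i) = i + 1 := by omega
        have hsplit : ss ^ (J - 1 - i) = ss ^ J * qq ^ (i + 1) := by
          have h : ss ^ (J - 1 - i) * (ss ^ (i + 1) * qq ^ (i + 1)) = ss ^ J * qq ^ (i+1) := by
            rw [← mul_assoc, ← pow_add]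
            congr 2
            omega
          rwa [ss_pow_mul_qq_pow, mul_one] at h
        rw [hJi, hsplit]
        have hq1i : qq ^ (i + 1) ≤ qq ^ i := by
          rw [pow_succ]
          nlinarith [pow_pos hq0 i]
        have hcast : ((i + 1 : ℕ) : ℝ) = (i : ℝ) + 1 := by push_cast; ring
        have hterm : qq ^ (i + 1) * (4 * ((i + 1 : ℕ) : ℝ) + c5)
            ≤ qq ^ i * (4 * (i:ℝ) + (4 + c5)) := by
          rw [hcast]
          have h1 : (0:ℝ) ≤ 4 * ((i:ℝ) + 1) + c5 := by positivity
          have h2 : 4 * ((i:ℝ) + 1) + c5 = 4 * (i:ℝ) + (4 + c5) := by ring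
          calc qq ^ (i + 1) * (4 * ((i:ℝ) + 1) + c5)
              ≤ qq ^ i * (4 * ((i:ℝ) + 1) + c5) := mul_le_mul_of_nonneg_right hq1i h1
            _ = qq ^ i * (4 * (i:ℝ) + (4 + c5)) := by rw [h2]
        calc ss ^ J * qq ^ (i + 1) * (4 * ((i + 1 : ℕ) : ℝ) + c5)
            = ss ^ J * (qq ^ (i + 1) * (4 * ((i + 1 : ℕ) : ℝ) + c5)) := by ring
          _ ≤ ss ^ J * (qq ^ i * (4 * (i:ℝ) + (4 + c5))) :=
              mul_le_mul_of_nonneg_left hterm (by positivity)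
          _ = ss ^ J * (4 * ((i:ℝ) * qq ^ i) + (4 + c5) * qq ^ i) := by ring
      calc ∑ i ∈ range J, ss ^ (J - 1 - i) * (4 * ((J - (J - 1 - i) : ℕ) : ℝ) + c5)
          ≤ ∑ i ∈ range J, ss ^ J * (4 * ((i:ℝ) * qq ^ i) + (4 + c5) * qq ^ i) :=
            Finset.sum_le_sum step2a
        _ = ss ^ J * ∑ i ∈ range J, (4 * ((i:ℝ) * qq ^ i) + (4 + c5) * qq ^ i) := by
            rw [Finset.mul_sum]
        _ ≤ ss ^ J * c6 := by
            apply mul_le_mul_of_nonneg_left _ (by positivity)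
            rw [← tsum_g]
            apply Summable.sum_le_tsum _ _ summable_g
            intro i _
            have : (0:ℝ) ≤ qq ^ i := by positivity
            have h2 : (0:ℝ) ≤ (i:ℝ) := by positivity
            positivity
    calc ∑ j ∈ range J, T j
        ≤ ∑ j ∈ range J, L ^ (-(1:ℝ)/2) * (ss ^ j * (4 * ((J - j : ℕ) : ℝ) + c5)) := step1
      _ = L ^ (-(1:ℝ)/2) * ∑ j ∈ range J, ss ^ j * (4 * ((J - j : ℕ) : ℝ) + c5) := by
          rw [Finset.mul_sum]
      _ ≤ L ^ (-(1:ℝ)/2) * (ss ^ J * c6) := mul_le_mul_of_nonneg_left step2 ha0.le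
      _ = L ^ (-(1:ℝ)/2) * ss ^ J * c6 := by ring
  -- summing the tail
  have hTail : ∑' j, T (j + J) ≤ c4 * L ^ (-(1:ℝ)/4) * qq ^ J * c0 := by
    calc ∑' j, T (j + J) ≤ ∑' j : ℕ, (c4 * L ^ (-(1:ℝ)/4) * qq ^ J) * qq ^ j := by
          apply Summable.tsum_le_tsum _ (hsummableT.comp_injective (add_left_injective J))
            (summable_qq.mul_left _)
          intro j
          calc T (j + J) ≤ c4 * L ^ (-(1:ℝ)/4) * qq ^ (j + J) := hTj (j + J)
            _ = (c4 * L ^ (-(1:ℝ)/4) * qq ^ J) * qq ^ j := by rw [pow_add]; ring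
      _ = (c4 * L ^ (-(1:ℝ)/4) * qq ^ J) * c0 := by rw [tsum_mul_left, tsum_qq]
      _ = c4 * L ^ (-(1:ℝ)/4) * qq ^ J * c0 := by ring
  -- the rpow estimates for ss^J and qq^J
  have h2_4J_le : (2:ℝ) ^ (4 * J) ≤ 8 * L := by
    calc (2:ℝ) ^ (4 * J) ≤ (2:ℝ) ^ (M + 3) := pow_le_pow_right₀ one_le_two hJ2
      _ = 8 * (2:ℝ) ^ M := by ring
      _ ≤ 8 * L := by linarith
  have h2_4J_ge : L / 2 ≤ (2:ℝ) ^ (4 * J) := by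
    have h : L / 2 ≤ (2:ℝ) ^ M := by
      have h2 : (2:ℝ) ^ (M+1) = 2 * (2:ℝ) ^ M := by ring
      nlinarith
    calc L / 2 ≤ (2:ℝ) ^ M := h
      _ ≤ (2:ℝ) ^ (4 * J) := pow_le_pow_right₀ one_le_two hJ1
  have hssJ : ss ^ J ≤ (8 * L) ^ ((1:ℝ)/8) := by
    have h1 : ss ^ J = ((2:ℝ) ^ (4 * J)) ^ ((1:ℝ)/8) := by
      rw [ss_pow, ← Real.rpow_natCast (2:ℝ) (4 * J), ← Real.rpow_mul (by norm_num)]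
      push_cast; ring_nf
    rw [h1]
    exact Real.rpow_le_rpow (by positivity) h2_4J_le (by norm_num)
  have hqqJ : qq ^ J ≤ (L / 2) ^ (-(1:ℝ)/8) := by
    have h1 : qq ^ J = ((2:ℝ) ^ (4 * J)) ^ (-(1:ℝ)/8) := by
      rw [qq_pow, ← Real.rpow_natCast (2:ℝ) (4 * J), ← Real.rpow_mul (by norm_num)]
      push_cast; ring_nf
    rw [h1]
    exact Real.rpow_le_rpow_of_nonpos (by positivity) h2_4J_ge (by norm_num)
  -- final assembly
  have hfin1 : L ^ (-(1:ℝ)/2) * ss ^ J * c6 ≤ c6 * (8:ℝ) ^ ((1:ℝ)/8) * L ^ (-(3:ℝ)/8) := by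
    calc L ^ (-(1:ℝ)/2) * ss ^ J * c6 ≤ L ^ (-(1:ℝ)/2) * (8 * L) ^ ((1:ℝ)/8) * c6 := by
          apply mul_le_mul_of_nonneg_right (mul_le_mul_of_nonneg_left hssJ ha0.le) hc6pos.le
      _ = c6 * (8:ℝ) ^ ((1:ℝ)/8) * (L ^ (-(1:ℝ)/2) * L ^ ((1:ℝ)/8)) := by
          rw [Real.mul_rpow (by norm_num) hL0.le]; ring
      _ = c6 * (8:ℝ) ^ ((1:ℝ)/8) * L ^ (-(3:ℝ)/8) := by
          rw [← Real.rpow_add hL0]; norm_num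
  have hfin2 : c4 * L ^ (-(1:ℝ)/4) * qq ^ J * c0
      ≤ c4 * c0 * (2:ℝ) ^ ((1:ℝ)/8) * L ^ (-(3:ℝ)/8) := by
    have hLd : (L / 2) ^ (-(1:ℝ)/8) = (2:ℝ) ^ ((1:ℝ)/8) * L ^ (-(1:ℝ)/8) := by
      rw [Real.div_rpow hL0.le (by norm_num) _, div_eq_mul_inv,
        ← Real.rpow_neg (by norm_num : (0:ℝ) ≤ 2)]
      norm_num
      ring
    calc c4 * L ^ (-(1:ℝ)/4) * qq ^ J * c0
        ≤ c4 * L ^ (-(1:ℝ)/4) * ((L / 2) ^ (-(1:ℝ)/8)) * c0 := by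
          apply mul_le_mul_of_nonneg_right _ hc0pos.le
          apply mul_le_mul_of_nonneg_left hqqJ (by positivity)
      _ = c4 * c0 * (2:ℝ) ^ ((1:ℝ)/8) * (L ^ (-(1:ℝ)/4) * L ^ (-(1:ℝ)/8)) := by
          rw [hLd]; ring
      _ = c4 * c0 * (2:ℝ) ^ ((1:ℝ)/8) * L ^ (-(3:ℝ)/8) := by
          rw [← Real.rpow_add hL0]; norm_num
  have hfinal : ∑' j, T j ≤ (c6 * (8:ℝ) ^ ((1:ℝ)/8) + c4 * c0 * (2:ℝ) ^ ((1:ℝ)/8))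
      * L ^ (-(3:ℝ)/8) := by
    calc ∑' j, T j = ∑ j ∈ range J, T j + ∑' j, T (j + J) :=
          (Summable.sum_add_tsum_nat_add J hsummableT).symm
      _ ≤ L ^ (-(1:ℝ)/2) * ss ^ J * c6 + c4 * L ^ (-(1:ℝ)/4) * qq ^ J * c0 :=
          add_le_add hHead hTail
      _ ≤ c6 * (8:ℝ) ^ ((1:ℝ)/8) * L ^ (-(3:ℝ)/8)
          + c4 * c0 * (2:ℝ) ^ ((1:ℝ)/8) * L ^ (-(3:ℝ)/8) := add_le_add hfin1 hfin2
      _ = (c6 * (8:ℝ) ^ ((1:ℝ)/8) + c4 * c0 * (2:ℝ) ^ ((1:ℝ)/8)) * L ^ (-(3:ℝ)/8) := by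
          ring
  calc (∑' j : ℕ, ∑' k : ℕ,
      min (min ((L * (2 : ℝ) ^ (-(k : ℝ))) ^ (-(1 : ℝ) / 2) * (2 : ℝ) ^ (-(j : ℝ) / 2))
            ((L * (2 : ℝ) ^ (-(j : ℝ))) ^ (-(1 : ℝ) / 2)))
          ((2 : ℝ) ^ (-(j : ℝ) / 2) * (2 : ℝ) ^ (-(k : ℝ) / 2)))
      = ∑' j, T j := by
        apply tsum_congr; intro j; apply tsum_congr; intro k; exact hsummand j k
    _ ≤ (c6 * (8:ℝ) ^ ((1:ℝ)/8) + c4 * c0 * (2:ℝ) ^ ((1:ℝ)/8)) * L ^ (-(3:ℝ)/8) := hfinal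
end

section
/- Let λ > 0 and let ψ : ℝ³ → ℂ be a C¹ function supported in the unit ball. Define K(u,v,x,y) = ∫_ℝ e^{iλ[(u-x)t² + (v²-y²)t]} conj(ψ(x,y,t)) ψ(u,v,t) dt. Then there is a constant C, depending only on ψ, such that |K(u,v,x,y)| ≤ C λ^{-1/2} (|u-x| + |v²-y²|)^{-1/2} for all (u,v,x,y) with (u-x, v²-y²) ≠ (0,0). -/
/-!
With `A = λ(u - x)` and `B = λ(v² - y²)` the kernel is `∫ e^{i(At² + Bt)} g(t) dt` for a `C¹`
amplitude `g = conj ψ(x, y, ·) ψ(u, v, ·)` supported in `[-1, 1]`. Integrating by parts moves the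
derivative onto `g`, so it suffices to bound the partial integrals `∫ₐᵇ e^{i(At² + Bt)} dt` over
`[a, b] ⊆ [-2, 2]` by `C (|A| + |B|)^{-1/2}`. When `|B| ≤ 8|A|` this is van der Corput's
second-derivative bound `O(|A|^{-1/2})`: complete the square and split the Fresnel integral at
distance `|A|^{-1/2}` from the stationary point, using the first-derivative bound beyond it.
When `|B| > 8|A|` the phase derivative stays above `|B|/2` on `[-2, 2]`, and the first-derivative
bound `O(1/|B|)` together with the trivial bound suffices.
-/

open MeasureTheory Real Set intervalIntegral Complex

noncomputable def quadPhase (A B t : ℝ) : ℂ :=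
  exp (((A * t ^ 2 + B * t : ℝ) : ℂ) * I)

section

variable (A B : ℝ)

@[fun_prop]
theorem continuous_quadPhase : Continuous (quadPhase A B) := by
  unfold quadPhase; fun_prop

theorem norm_quadPhase (t : ℝ) : ‖quadPhase A B t‖ = 1 :=
  norm_exp_ofReal_mul_I _

theorem hasDerivAt_quadPhase (t : ℝ) :
    HasDerivAt (quadPhase A B) (quadPhase A B t * (((2 * A * t + B : ℝ) : ℂ) * I)) t := by
  have h : HasDerivAt (fun t => A * t ^ 2 + B * t) (2 * A * t + B) t := by
    refine (((hasDerivAt_pow 2 t).const_mul A).fun_add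
      ((hasDerivAt_id' t).const_mul B)).congr_deriv ?_
    push_cast; ring
  exact (h.ofReal_comp.mul_const I).cexp

theorem norm_integral_quadPhase_le (a b : ℝ) : ‖∫ t in a..b, quadPhase A B t‖ ≤ |b - a| := by
  simpa using norm_integral_le_of_norm_le_const (fun t _ => (norm_quadPhase A B t).le)

end

theorem norm_integral_quadPhase_le_of_le_abs_deriv {A B a b c : ℝ} (hab : a ≤ b) (hc : 0 < c)
    (hφ' : ∀ t ∈ Icc a b, c ≤ |2 * A * t + B|) :
    ‖∫ t in a..b, quadPhase A B t‖ ≤ 4 / c := by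
  set φ' : ℝ → ℝ := fun t => 2 * A * t + B
  rw [← uIcc_of_le hab] at hφ'
  have hφ'_ne : ∀ t ∈ uIcc a b, φ' t ≠ 0 := fun t ht h0 => by
    have := hφ' t ht; simp only [φ', h0, abs_zero] at this; linarith
  have hinv_le : ∀ t ∈ uIcc a b, |(φ' t)⁻¹| ≤ 1 / c := fun t ht => by
    rw [abs_inv, one_div]; exact inv_anti₀ hc (hφ' t ht)
  have hφ'_deriv (t : ℝ) : HasDerivAt φ' (2 * A) t :=
    (((hasDerivAt_id' t).const_mul (2 * A)).add_const B).congr_deriv (mul_one _)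
  -- integrate by parts against `u = 1 / (i φ')`
  set u : ℝ → ℂ := fun t => ((φ' t : ℂ) * I)⁻¹
  set u' : ℝ → ℂ := fun t => ((2 * A / φ' t ^ 2 : ℝ) : ℂ) * I
  have hu : ∀ t ∈ uIcc a b, HasDerivAt u (u' t) t := fun t ht => by
    have hne : (φ' t : ℂ) * I ≠ 0 := mul_ne_zero (ofReal_ne_zero.2 (hφ'_ne t ht)) I_ne_zero
    refine (((hφ'_deriv t).ofReal_comp.mul_const I).inv hne).congr_deriv ?_
    have : (φ' t : ℂ) ≠ 0 := ofReal_ne_zero.2 (hφ'_ne t ht)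
    simp only [u']; push_cast; field_simp; rw [I_sq]; ring
  have hu'_cont : ContinuousOn u' (uIcc a b) := by
    refine (ContinuousOn.mul ?_ continuousOn_const)
    refine continuous_ofReal.comp_continuousOn (continuousOn_const.div (by fun_prop) ?_)
    exact fun t ht => pow_ne_zero 2 (hφ'_ne t ht)
  have hparts := intervalIntegral.integral_mul_deriv_eq_deriv_mul hu
    (fun t _ => hasDerivAt_quadPhase A B t) hu'_cont.intervalIntegrable
    (Continuous.intervalIntegrable (by fun_prop) _ _)
  have hlhs : ∫ t in a..b, u t * (quadPhase A B t * ((φ' t : ℂ) * I)) =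
      ∫ t in a..b, quadPhase A B t := integral_congr fun t ht => by
    have : (φ' t : ℂ) ≠ 0 := ofReal_ne_zero.2 (hφ'_ne t ht)
    simp only [u]; field_simp
  have hu_le : ∀ t ∈ uIcc a b, ‖u t * quadPhase A B t‖ ≤ 1 / c := fun t ht => by
    simpa [u, norm_quadPhase] using hinv_le t ht
  -- `w' = |(1 / φ')'|` (here `|A| / A` is the sign of `A`, and `0 / 0 = 0` covers `A = 0`),
  -- so the variation term telescopes
  set w : ℝ → ℝ := fun t => -(|A| / A) * (φ' t)⁻¹
  have hw : ∀ t ∈ uIcc a b, HasDerivAt w (2 * |A| / φ' t ^ 2) t := fun t ht => by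
    refine (((hφ'_deriv t).inv (hφ'_ne t ht)).const_mul _).congr_deriv ?_
    rcases eq_or_ne A 0 with hA | hA
    · simp [hA]
    · field_simp
  have hw_le : ∀ t ∈ uIcc a b, |w t| ≤ 1 / c := fun t ht => by
    have : |(|A| / A)| ≤ 1 := by rw [abs_div, abs_abs]; exact div_self_le_one _
    calc |w t| = |(|A| / A)| * |(φ' t)⁻¹| := by rw [abs_mul, abs_neg]
      _ ≤ 1 * (1 / c) := by gcongr; exact hinv_le t ht
      _ = 1 / c := one_mul _
  have hvar : ‖∫ t in a..b, u' t * quadPhase A B t‖ ≤ 2 / c := by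
    have hcont : ContinuousOn (fun t => 2 * |A| / φ' t ^ 2) (uIcc a b) :=
      continuousOn_const.div (by fun_prop) fun t ht => pow_ne_zero 2 (hφ'_ne t ht)
    calc ‖∫ t in a..b, u' t * quadPhase A B t‖ ≤ ∫ t in a..b, 2 * |A| / φ' t ^ 2 := by
          refine norm_integral_le_of_norm_le hab (Filter.Eventually.of_forall fun t ht => ?_)
            hcont.intervalIntegrable
          simp [u', norm_quadPhase]
      _ = w b - w a := integral_eq_sub_of_hasDerivAt hw hcont.intervalIntegrable
      _ ≤ 2 / c := by
          obtain ⟨-, hb⟩ := abs_le.1 (hw_le b right_mem_uIcc)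
          obtain ⟨ha, -⟩ := abs_le.1 (hw_le a left_mem_uIcc)
          linarith [show 2 / c = 1 / c + 1 / c by ring]
  rw [← hlhs, hparts]
  calc ‖u b * quadPhase A B b - u a * quadPhase A B a - ∫ t in a..b, u' t * quadPhase A B t‖
      ≤ ‖u b * quadPhase A B b‖ + ‖u a * quadPhase A B a‖ +
          ‖∫ t in a..b, u' t * quadPhase A B t‖ :=
        (norm_sub_le _ _).trans (add_le_add_left (norm_sub_le _ _) _)
    _ ≤ 4 / c := by
        linarith [hu_le b right_mem_uIcc, hu_le a left_mem_uIcc, show 4 / c = 4 * (1 / c) by ring,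
          show 2 / c = 2 * (1 / c) by ring]

theorem quadPhase_zero_neg (A t : ℝ) : quadPhase A 0 (-t) = quadPhase A 0 t := by
  simp [quadPhase]

theorem quadPhase_eq_mul_quadPhase_zero {A : ℝ} (hA : A ≠ 0) (B t : ℝ) :
    quadPhase A B t =
      exp (((-(B ^ 2 / (4 * A)) : ℝ) : ℂ) * I) * quadPhase A 0 (t + B / (2 * A)) := by
  simp only [quadPhase, ← Complex.exp_add, ← add_mul]
  have : (A : ℂ) ≠ 0 := ofReal_ne_zero.2 hA
  congr 2
  push_cast
  field_simp
  ring

theorem norm_integral_quadPhase_zero_le_of_nonneg {A β : ℝ} (hA : A ≠ 0) (hβ : 0 ≤ β) :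
    ‖∫ t in (0 : ℝ)..β, quadPhase A 0 t‖ ≤ 3 / √|A| := by
  have hs : 0 < √|A| := sqrt_pos.2 (abs_pos.2 hA)
  have hδ : 0 < 1 / √|A| := by positivity
  rcases le_or_gt β (1 / √|A|) with hβδ | hδβ
  · calc ‖∫ t in (0 : ℝ)..β, quadPhase A 0 t‖ ≤ |β - 0| := norm_integral_quadPhase_le A 0 0 β
      _ = β := by rw [sub_zero, abs_of_nonneg hβ]
      _ ≤ 3 / √|A| := hβδ.trans (div_le_div_of_nonneg_right (by norm_num) hs.le)
  -- away from the stationary point `0`, the phase derivative `2 A t` is at least `2 √|A|`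
  have hfar : ‖∫ t in (1 / √|A|)..β, quadPhase A 0 t‖ ≤ 2 / √|A| := by
    refine (norm_integral_quadPhase_le_of_le_abs_deriv hδβ.le (by positivity : 0 < 2 * √|A|)
      fun t ht => ?_).trans_eq (by field_simp; norm_num)
    have ht0 : 0 ≤ t := hδ.le.trans ht.1
    calc 2 * √|A| = 2 * |A| * (1 / √|A|) := by field_simp; rw [sq_sqrt (abs_nonneg A)]
      _ ≤ 2 * |A| * t := by gcongr; exact ht.1
      _ = |2 * A * t + 0| := by rw [add_zero, abs_mul, abs_mul, abs_two, abs_of_nonneg ht0]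
  have hnear := norm_integral_quadPhase_le A 0 0 (1 / √|A|)
  rw [sub_zero, abs_of_pos hδ] at hnear
  rw [← integral_add_adjacent_intervals ((continuous_quadPhase A 0).intervalIntegrable _ _)
    ((continuous_quadPhase A 0).intervalIntegrable _ _)]
  calc _ ≤ _ := norm_add_le _ _
    _ ≤ 1 / √|A| + 2 / √|A| := add_le_add hnear hfar
    _ = 3 / √|A| := by ring

theorem norm_integral_quadPhase_zero_le {A : ℝ} (hA : A ≠ 0) (β : ℝ) :
    ‖∫ t in (0 : ℝ)..β, quadPhase A 0 t‖ ≤ 3 / √|A| := by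
  rcases le_total 0 β with hβ | hβ
  · exact norm_integral_quadPhase_zero_le_of_nonneg hA hβ
  · have hflip : ∫ t in (0 : ℝ)..β, quadPhase A 0 t = -∫ t in (0 : ℝ)..-β, quadPhase A 0 t := by
      rw [← integral_symm, ← neg_zero, ← integral_comp_neg]
      simp only [neg_zero, quadPhase_zero_neg]
    rw [hflip, norm_neg]
    exact norm_integral_quadPhase_zero_le_of_nonneg hA (neg_nonneg.2 hβ)

theorem norm_integral_quadPhase_le_inv_sqrt {A : ℝ} (hA : A ≠ 0) (B a b : ℝ) :
    ‖∫ t in a..b, quadPhase A B t‖ ≤ 6 / √|A| := by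
  have hint (x y : ℝ) : IntervalIntegrable (quadPhase A 0) volume x y :=
    (continuous_quadPhase A 0).intervalIntegrable x y
  simp_rw [quadPhase_eq_mul_quadPhase_zero hA B, intervalIntegral.integral_const_mul,
    integral_comp_add_right,
    norm_mul, norm_exp_ofReal_mul_I, one_mul]
  rw [← integral_interval_sub_left (hint 0 _) (hint 0 _)]
  calc _ ≤ _ := norm_sub_le _ _
    _ ≤ 3 / √|A| + 3 / √|A| :=
        add_le_add (norm_integral_quadPhase_zero_le hA _) (norm_integral_quadPhase_zero_le hA _)
    _ = 6 / √|A| := by ring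

theorem norm_integral_quadPhase_le_inv_sqrt_abs_add_abs {A B a b : ℝ} (hAB : 0 < |A| + |B|)
    (ha : -2 ≤ a) (hab : a ≤ b) (hb : b ≤ 2) :
    ‖∫ t in a..b, quadPhase A B t‖ ≤ 18 / √(|A| + |B|) := by
  have hs : 0 < √(|A| + |B|) := sqrt_pos.2 hAB
  rcases le_or_gt |B| (8 * |A|) with hBA | hAB
  · have hA : A ≠ 0 := fun hA => by
      rw [hA, abs_zero, mul_zero] at hBA; rw [hA, abs_zero] at hAB; linarith
    have hsA : 0 < √|A| := sqrt_pos.2 (abs_pos.2 hA)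
    have hle : √(|A| + |B|) ≤ 3 * √|A| := by
      calc √(|A| + |B|) ≤ √(3 ^ 2 * |A|) := sqrt_le_sqrt (by linarith)
        _ = 3 * √|A| := by rw [sqrt_mul (by norm_num), sqrt_sq (by norm_num)]
    calc _ ≤ 6 / √|A| := norm_integral_quadPhase_le_inv_sqrt hA B a b
      _ ≤ 18 / √(|A| + |B|) := by
        rw [div_le_div_iff₀ hsA hs]; linarith
  -- `B` dominates, so the phase has no stationary point in `[-2, 2]`
  have hφ' : ∀ t ∈ Icc a b, |B| / 2 ≤ |2 * A * t + B| := fun t ht => by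
    have ht2 : |t| ≤ 2 := abs_le.2 ⟨ha.trans ht.1, ht.2.trans hb⟩
    have : |2 * A * t| ≤ 4 * |A| := by
      rw [abs_mul, abs_mul, abs_two]; nlinarith [abs_nonneg A]
    have := abs_sub_abs_le_abs_sub B (-(2 * A * t))
    rw [abs_neg, sub_neg_eq_add, add_comm] at this
    linarith
  rcases le_total (|A| + |B|) 1 with hD | hD
  · calc _ ≤ |b - a| := norm_integral_quadPhase_le A B a b
      _ ≤ 4 := by rw [abs_of_nonneg (sub_nonneg.2 hab)]; linarith
      _ ≤ 18 / √(|A| + |B|) := by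
        rw [le_div_iff₀ hs]; nlinarith [sqrt_le_one.2 hD]
  · calc _ ≤ 4 / (|B| / 2) :=
          norm_integral_quadPhase_le_of_le_abs_deriv hab (by linarith [abs_nonneg A]) hφ'
      _ ≤ 18 / √(|A| + |B|) := by
        have : √(|A| + |B|) ≤ |A| + |B| := sqrt_le_self_iff.2 (Or.inr hD)
        rw [div_le_div_iff₀ (by linarith [abs_nonneg A]) hs]; linarith

theorem norm_integral_quadPhase_mul_le {A B M : ℝ} (hAB : 0 < |A| + |B|) {g g' : ℝ → ℂ}
    (hg : ∀ t, HasDerivAt g (g' t) t) (hg'_cont : Continuous g') (hg'_le : ∀ t, ‖g' t‖ ≤ M)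
    (hg_zero : ∀ t, 1 < |t| → g t = 0) :
    ‖∫ t, quadPhase A B t * g t‖ ≤ 72 * M / √(|A| + |B|) := by
  have hsupp : Function.support (fun t => quadPhase A B t * g t) ⊆ Ioc (-2) 2 := by
    refine (Function.support_mul_subset_right _ _).trans fun t ht => ?_
    obtain ⟨h1, h2⟩ := abs_le.1 (not_lt.1 (mt (hg_zero t) ht))
    exact ⟨by linarith, by linarith⟩
  set F : ℝ → ℂ := fun r => ∫ t in (-2)..r, quadPhase A B t
  have hF (r : ℝ) : HasDerivAt F (quadPhase A B r) r :=
    integral_hasDerivAt_right ((continuous_quadPhase A B).intervalIntegrable _ _)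
      ((continuous_quadPhase A B).stronglyMeasurableAtFilter _ _)
      (continuous_quadPhase A B).continuousAt
  have hparts := integral_mul_deriv_eq_deriv_mul (a := -2) (b := 2) (fun r _ => hF r)
    (fun t _ => hg t) ((continuous_quadPhase A B).intervalIntegrable _ _)
    (hg'_cont.intervalIntegrable _ _)
  rw [hg_zero 2 (by norm_num), hg_zero (-2) (by norm_num), mul_zero, mul_zero, sub_zero,
    zero_sub] at hparts
  rw [← integral_eq_integral_of_support_subset hsupp, ← norm_neg, ← hparts]
  calc ‖∫ t in (-2)..2, F t * g' t‖ ≤ 18 / √(|A| + |B|) * M * |2 - (-2)| := by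
        refine norm_integral_le_of_norm_le_const fun t ht => ?_
        rw [uIoc_of_le (by norm_num)] at ht
        rw [norm_mul]
        exact mul_le_mul
          (norm_integral_quadPhase_le_inv_sqrt_abs_add_abs hAB le_rfl ht.1.le ht.2) (hg'_le t)
          (norm_nonneg _) (by positivity)
    _ = 72 * M / √(|A| + |B|) := by norm_num; ring

section

open Function ComplexConjugate

variable {ψ : ℝ → ℝ → ℝ → ℂ}

theorem hasCompactSupport_uncurry_of_mem_unitBall
    (hsupp : ∀ x y t : ℝ, ψ x y t ≠ 0 → x ^ 2 + y ^ 2 + t ^ 2 ≤ 1) : HasCompactSupport ↿ψ := by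
  refine HasCompactSupport.intro (K := Icc (-1) 1 ×ˢ Icc (-1) 1 ×ˢ Icc (-1) 1)
    (isCompact_Icc.prod (isCompact_Icc.prod isCompact_Icc)) ?_
  rintro ⟨x, y, t⟩ hK
  by_contra h
  have := hsupp x y t h
  refine hK ⟨?_, ?_, ?_⟩ <;> rw [mem_Icc, ← abs_le, ← sq_le_one_iff_abs_le_one] <;>
    nlinarith [sq_nonneg x, sq_nonneg y, sq_nonneg t]

theorem hasDerivAt_slice (hψ : Differentiable ℝ ↿ψ) (x y t : ℝ) :
    HasDerivAt (ψ x y) (fderiv ℝ ↿ψ (x, y, t) (0, 0, 1)) t := by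
  have hline : HasDerivAt (fun s : ℝ => (x, y, s)) ((0 : ℝ), (0 : ℝ), (1 : ℝ)) t :=
    (hasDerivAt_const t x).prodMk ((hasDerivAt_const t y).prodMk (hasDerivAt_id' t))
  exact (hψ (x, y, t)).hasFDerivAt.comp_hasDerivAt t hline

theorem exists_bound_slice_of_hasCompactSupport (hψ : ContDiff ℝ 1 ↿ψ)
    (hc : HasCompactSupport ↿ψ) :
    ∃ M, 0 < M ∧ ∀ x y t, ‖ψ x y t‖ ≤ M ∧ ‖fderiv ℝ ↿ψ (x, y, t) (0, 0, 1)‖ ≤ M := by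
  obtain ⟨M₀, hM₀⟩ := hc.exists_bound_of_continuous hψ.continuous
  obtain ⟨M₁, hM₁⟩ := (hc.fderiv ℝ).exists_bound_of_continuous (hψ.continuous_fderiv one_ne_zero)
  refine ⟨max 1 (max M₀ M₁), by positivity, fun x y t => ⟨?_, ?_⟩⟩
  · exact (hM₀ (x, y, t)).trans (by simp)
  · calc ‖fderiv ℝ ↿ψ (x, y, t) (0, 0, 1)‖
        ≤ ‖fderiv ℝ ↿ψ (x, y, t)‖ * ‖((0 : ℝ), (0 : ℝ), (1 : ℝ))‖ :=
          ContinuousLinearMap.le_opNorm _ _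
      _ = ‖fderiv ℝ ↿ψ (x, y, t)‖ := by simp [Prod.norm_def]
      _ ≤ max 1 (max M₀ M₁) := (hM₁ _).trans (by simp)

theorem norm_integral_quadPhase_conj_mul_le (hψ : ContDiff ℝ 1 ↿ψ) {M : ℝ}
    (hM : ∀ x y t, ‖ψ x y t‖ ≤ M ∧ ‖fderiv ℝ ↿ψ (x, y, t) (0, 0, 1)‖ ≤ M)
    (hzero : ∀ x y t, 1 < |t| → ψ x y t = 0) {A B : ℝ} (hAB : 0 < |A| + |B|) (x y u v : ℝ) :
    ‖∫ t, quadPhase A B t * (conj (ψ x y t) * ψ u v t)‖ ≤ 144 * M ^ 2 / √(|A| + |B|) := by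
  set D : ℝ → ℝ → ℝ → ℂ := fun x y t => fderiv ℝ ↿ψ (x, y, t) (0, 0, 1)
  have hderiv := hasDerivAt_slice (hψ.differentiable one_ne_zero)
  refine (norm_integral_quadPhase_mul_le (M := 2 * M ^ 2) hAB
    (g' := fun t => conj (D x y t) * ψ u v t + conj (ψ x y t) * D u v t)
    (fun t => (hderiv x y t).star.mul (hderiv u v t)) (by fun_prop) (fun t => ?_)
    (fun t ht => by simp [hzero u v t ht])).trans_eq (by ring)
  obtain ⟨h₁, h₂⟩ := hM x y t
  obtain ⟨h₃, h₄⟩ := hM u v t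
  have hM0 : 0 ≤ M := (norm_nonneg _).trans h₁
  calc _ ≤ ‖D x y t‖ * ‖ψ u v t‖ + ‖ψ x y t‖ * ‖D u v t‖ := by
        refine (norm_add_le _ _).trans_eq ?_
        simp only [norm_mul, RCLike.norm_conj]
    _ ≤ M * M + M * M :=
        add_le_add (mul_le_mul h₂ h₃ (norm_nonneg _) hM0) (mul_le_mul h₁ h₄ (norm_nonneg _) hM0)
    _ = 2 * M ^ 2 := by ring

end

/-- Kernel estimate for `𝒪_λ 𝒪_λ^*`: if `ψ` is `C¹` and supported in the unit ball, the
kernel `K(u,v,x,y) = ∫ e^{iλ[(u-x)t² + (v²-y²)t]} conj(ψ(x,y,t)) ψ(u,v,t) dt` satisfies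
`|K| ≤ C λ^{-1/2} (|u-x| + |v²-y²|)^{-1/2}` with `C` depending only on `ψ`. -/
theorem stmt5 (ψ : ℝ → ℝ → ℝ → ℂ)
    (hψ : ContDiff ℝ 1 (fun p : ℝ × ℝ × ℝ => ψ p.1 p.2.1 p.2.2))
    (hsupp : ∀ x y t : ℝ, ψ x y t ≠ 0 → x ^ 2 + y ^ 2 + t ^ 2 ≤ 1) :
    ∃ C : ℝ, 0 < C ∧ ∀ L : ℝ, 0 < L → ∀ u v x y : ℝ,
      ¬(u - x = 0 ∧ v ^ 2 - y ^ 2 = 0) →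
      ‖∫ t : ℝ, Complex.exp (Complex.I * (L : ℂ) *
            (((u - x) * t ^ 2 + (v ^ 2 - y ^ 2) * t : ℝ) : ℂ)) *
          (starRingEnd ℂ) (ψ x y t) * ψ u v t‖ ≤
        C * L ^ (-(1 : ℝ) / 2) * (|u - x| + |v ^ 2 - y ^ 2|) ^ (-(1 : ℝ) / 2) := by
  obtain ⟨M, hM, hbound⟩ :=
    exists_bound_slice_of_hasCompactSupport hψ (hasCompactSupport_uncurry_of_mem_unitBall hsupp)
  have hzero (x y t : ℝ) (ht : 1 < |t|) : ψ x y t = 0 := by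
    by_contra h
    nlinarith [hsupp x y t h, sq_abs t, sq_nonneg x, sq_nonneg y]
  refine ⟨144 * M ^ 2, by positivity, fun L hL u v x y hne => ?_⟩
  have hD : 0 < |u - x| + |v ^ 2 - y ^ 2| := by
    rw [not_and_or] at hne
    rcases hne with h | h <;> positivity
  have hLD : |L * (u - x)| + |L * (v ^ 2 - y ^ 2)| = L * (|u - x| + |v ^ 2 - y ^ 2|) := by
    rw [abs_mul, abs_mul, abs_of_pos hL]; ring
  have hkernel := norm_integral_quadPhase_conj_mul_le hψ hbound hzero
    (A := L * (u - x)) (B := L * (v ^ 2 - y ^ 2)) (by rw [hLD]; positivity) x y u v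
  convert hkernel using 2
  · congr 1 with t
    rw [quadPhase, ← mul_assoc]
    congr 3
    push_cast; ring
  · rw [hLD, sqrt_mul hL.le, div_mul_eq_div_div, sqrt_eq_rpow, sqrt_eq_rpow, neg_div,
      rpow_neg hL.le, rpow_neg hD.le]
    ring
end

section
/- Suppose there exist δ ∈ ℝ and C > 0 such that for every λ ≥ 1 and the specific cut-off ψ with ψ = 1 on the ball of radius 1/2 and ψ = 0 outside the unit ball, the estimate ‖∫_ℝ e^{iλ(xt²+y²t)} ψ(x,y,t) f(t) dt‖_{L²(dx dy)} ≤ C λ^{-δ} ‖f‖_{L²(ℝ)} holds for all f ∈ L²(ℝ). Then δ ≤ 1/2. -/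
/-!
Test the estimate on `f = 𝟙_[0, r]` with `r ≈ λ^{-1/3}`. For `|x|, |y|, t ≤ r` the phase
`λ (x t² + y² t)` is at most `2 λ r³ ≤ 1` in absolute value, so the real part of the integrand is
`≥ 1/2` and `|𝒪_λ f (x, y)| ≥ r / 2` on the square `[-r, r]²`. Hence `‖𝒪_λ f‖₂ ≥ r²` while
`‖f‖₂ = √r`, so `r^{3/2} ≈ λ^{-1/2} ≲ λ^{-δ}` for all large `λ`, which forces `δ ≤ 1/2`.
-/

open MeasureTheory Real ENNReal

lemma Real.half_le_cos_of_abs_le_one {θ : ℝ} (h : |θ| ≤ 1) : 1 / 2 ≤ cos θ := by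
  have hθ : θ ^ 2 ≤ 1 := by nlinarith [sq_abs θ, abs_nonneg θ]
  linarith [one_sub_sq_div_two_le_cos (x := θ)]

lemma le_norm_setIntegral_of_le_re {α : Type*} [MeasurableSpace α] {μ : Measure α} {s : Set α}
    (hs : MeasurableSet s) (hμs : μ s ≠ ∞) {g : α → ℂ} (hg : IntegrableOn g s μ) {c : ℝ}
    (hc : ∀ t ∈ s, c ≤ (g t).re) : μ.real s * c ≤ ‖∫ t in s, g t ∂μ‖ :=
  calc μ.real s * c ≤ ∫ t in s, (g t).re ∂μ :=
        setIntegral_ge_of_const_le hs hμs hc hg.re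
    _ = (∫ t in s, g t ∂μ).re := integral_re hg
    _ ≤ ‖∫ t in s, g t ∂μ‖ := Complex.re_le_norm _

lemma abs_cubic_phase_le {r x y t : ℝ} (hx : |x| ≤ r) (hy : |y| ≤ r) (ht : t ∈ Set.Icc 0 r) :
    |x * t ^ 2 + y ^ 2 * t| ≤ 2 * r ^ 3 := by
  obtain ⟨ht0, htr⟩ := ht
  have hy2 : y ^ 2 ≤ r ^ 2 := by nlinarith [sq_abs y, abs_nonneg y]
  have h1 : |x * t ^ 2| ≤ r ^ 3 := by
    rw [abs_mul, abs_of_nonneg (sq_nonneg t)]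
    nlinarith [abs_nonneg x, pow_le_pow_left₀ ht0 htr 2]
  have h2 : |y ^ 2 * t| ≤ r ^ 3 := by
    rw [abs_of_nonneg (by positivity)]
    nlinarith [sq_nonneg y]
  linarith [abs_add_le (x * t ^ 2) (y ^ 2 * t)]

/-- `𝒪_λ f (x, y)` with `λ = L`. -/
noncomputable def oscillatoryOperator (ψ : ℝ → ℝ → ℝ → ℂ) (L : ℝ) (f : ℝ → ℂ) (p : ℝ × ℝ) : ℂ :=
  ∫ t : ℝ, Complex.exp (Complex.I * (L : ℂ) * (((p.1 * t ^ 2 + p.2 ^ 2 * t : ℝ)) : ℂ)) *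
    ψ p.1 p.2 t * f t

section TestFunction

variable {ψ : ℝ → ℝ → ℝ → ℂ} {L r : ℝ}

lemma oscillatoryOperator_indicator_apply
    (hψ1 : ∀ x y t : ℝ, x ^ 2 + y ^ 2 + t ^ 2 ≤ (1 / 2 : ℝ) ^ 2 → ψ x y t = 1)
    (hr : r ≤ 1 / 4) {x y : ℝ} (hx : |x| ≤ r) (hy : |y| ≤ r) :
    oscillatoryOperator ψ L ((Set.Icc 0 r).indicator 1) (x, y) =
      ∫ t in Set.Icc 0 r, Complex.exp (((L * (x * t ^ 2 + y ^ 2 * t) : ℝ) : ℂ) * Complex.I) := by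
  rw [oscillatoryOperator, ← integral_indicator measurableSet_Icc]
  congr 1 with t
  by_cases ht : t ∈ Set.Icc 0 r
  · have hψ : ψ x y t = 1 := by
      apply hψ1
      nlinarith [sq_abs x, sq_abs y, abs_nonneg x, abs_nonneg y, ht.1, ht.2]
    simp only [Set.indicator_of_mem ht, hψ, Pi.one_apply, mul_one]
    push_cast
    ring_nf
  · simp [Set.indicator_of_notMem ht]

lemma half_le_norm_oscillatoryOperator_indicator
    (hψ1 : ∀ x y t : ℝ, x ^ 2 + y ^ 2 + t ^ 2 ≤ (1 / 2 : ℝ) ^ 2 → ψ x y t = 1)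
    (hL : 0 ≤ L) (hr0 : 0 ≤ r) (hr : r ≤ 1 / 4) (hLr : L * r ^ 3 ≤ 1 / 2)
    {x y : ℝ} (hx : |x| ≤ r) (hy : |y| ≤ r) :
    r / 2 ≤ ‖oscillatoryOperator ψ L ((Set.Icc 0 r).indicator 1) (x, y)‖ := by
  rw [oscillatoryOperator_indicator_apply hψ1 hr hx hy]
  have hcos : ∀ t ∈ Set.Icc 0 r,
      1 / 2 ≤ (Complex.exp (((L * (x * t ^ 2 + y ^ 2 * t) : ℝ) : ℂ) * Complex.I)).re := by
    intro t ht
    rw [Complex.exp_ofReal_mul_I_re]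
    apply Real.half_le_cos_of_abs_le_one
    rw [abs_mul, abs_of_nonneg hL]
    nlinarith [abs_cubic_phase_le hx hy ht]
  have hint := le_norm_setIntegral_of_le_re (μ := volume) measurableSet_Icc (by simp)
    (Continuous.integrableOn_Icc (by fun_prop)) hcos
  rwa [measureReal_def, Real.volume_Icc, sub_zero, toReal_ofReal hr0, ← div_eq_mul_one_div] at hint

lemma ofReal_sq_le_eLpNorm_oscillatoryOperator_indicator
    (hψ1 : ∀ x y t : ℝ, x ^ 2 + y ^ 2 + t ^ 2 ≤ (1 / 2 : ℝ) ^ 2 → ψ x y t = 1)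
    (hL : 0 ≤ L) (hr0 : 0 ≤ r) (hr : r ≤ 1 / 4) (hLr : L * r ^ 3 ≤ 1 / 2) :
    ENNReal.ofReal (r ^ 2) ≤
      eLpNorm (oscillatoryOperator ψ L ((Set.Icc 0 r).indicator 1)) 2 volume := by
  set square : Set (ℝ × ℝ) := Set.Icc (-r) r ×ˢ Set.Icc (-r) r
  have hsquare : volume square = ENNReal.ofReal (2 * r) ^ 2 := by
    rw [Measure.volume_eq_prod, Measure.prod_prod, Real.volume_Icc, sq]
    ring_nf
  have hlower : eLpNorm (square.indicator fun _ => ((r / 2 : ℝ) : ℂ)) 2 volume =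
      ENNReal.ofReal (r ^ 2) := by
    rw [eLpNorm_indicator_const (measurableSet_Icc.prod measurableSet_Icc) two_ne_zero ofNat_ne_top,
      hsquare, toReal_ofNat, ← Nat.cast_ofNat, one_div, pow_rpow_inv_natCast two_ne_zero,
      ← ofReal_norm, Complex.norm_real, norm_of_nonneg (by positivity), ← ofReal_mul (by positivity)]
    ring_nf
  rw [← hlower]
  refine eLpNorm_mono fun p => ?_
  by_cases hp : p ∈ square
  · rw [Set.indicator_of_mem hp, Complex.norm_real, norm_of_nonneg (by positivity)]
    exact half_le_norm_oscillatoryOperator_indicator hψ1 hL hr0 hr hLr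
      (abs_le.mpr hp.1) (abs_le.mpr hp.2)
  · simp [Set.indicator_of_notMem hp]

end TestFunction

lemma eLpNorm_indicator_Icc_one {r : ℝ} (hr : 0 ≤ r) :
    eLpNorm ((Set.Icc 0 r).indicator (1 : ℝ → ℂ)) 2 volume = ENNReal.ofReal (√r) := by
  rw [show (Set.Icc 0 r).indicator (1 : ℝ → ℂ) = (Set.Icc 0 r).indicator fun _ => 1 from rfl,
    eLpNorm_indicator_const measurableSet_Icc two_ne_zero ofNat_ne_top, Real.volume_Icc, sub_zero,
    toReal_ofNat, ofReal_rpow_of_nonneg hr (by norm_num), Real.sqrt_eq_rpow]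
  simp

lemma nonpos_of_forall_rpow_le {a K : ℝ} (h : ∀ L : ℝ, 1 ≤ L → L ^ a ≤ K) : a ≤ 0 := by
  by_contra! ha
  obtain ⟨L, hL1, hLK⟩ := ((Filter.eventually_ge_atTop 1).and
    ((tendsto_rpow_atTop ha).eventually_gt_atTop K)).exists
  exact (h L hL1).not_gt hLK

lemma rpow_sub_half_le_of_oscillatoryOperator_bound {ψ : ℝ → ℝ → ℝ → ℂ} {δ C L : ℝ}
    (hψ1 : ∀ x y t : ℝ, x ^ 2 + y ^ 2 + t ^ 2 ≤ (1 / 2 : ℝ) ^ 2 → ψ x y t = 1) (hL : 1 ≤ L)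
    (hest : ∀ f : ℝ → ℂ, MemLp f 2 volume →
      eLpNorm (oscillatoryOperator ψ L f) 2 volume ≤
        ENNReal.ofReal (C * L ^ (-δ)) * eLpNorm f 2 volume) :
    L ^ (δ - 1 / 2) ≤ 8 * C := by
  have hL0 : 0 < L := one_pos.trans_le hL
  -- the test interval is `[0, a²]` with `a = L^{-1/6} / 2`, so that `√(a²) = a` and `L a⁶ = 1/64`
  set u := L ^ (-(1 / 6) : ℝ)
  have hu0 : 0 < u := rpow_pos_of_pos hL0 _
  have hu1 : u ≤ 1 := rpow_le_one_of_one_le_of_nonpos hL (by norm_num)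
  have hu_pow (n : ℕ) : u ^ n = L ^ (-(n / 6) : ℝ) := by
    rw [← Real.rpow_natCast, ← Real.rpow_mul hL0.le]
    ring_nf
  set a := u / 2 with ha
  have ha0 : 0 < a := by positivity
  have ha_sq : a ^ 2 ≤ 1 / 4 := by nlinarith
  have hLr : L * (a ^ 2) ^ 3 ≤ 1 / 2 := by
    have : L * u ^ 6 = 1 := by
      rw [hu_pow, show -((6 : ℕ) / 6 : ℝ) = -1 by norm_num, Real.rpow_neg_one, mul_inv_cancel₀ hL0.ne']
    have h64 : L * (a ^ 2) ^ 3 = L * u ^ 6 / 64 := by rw [ha]; ring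
    linarith
  have hchain : ENNReal.ofReal ((a ^ 2) ^ 2) ≤ ENNReal.ofReal (C * L ^ (-δ) * a) := by
    calc ENNReal.ofReal ((a ^ 2) ^ 2)
        ≤ eLpNorm (oscillatoryOperator ψ L ((Set.Icc 0 (a ^ 2)).indicator 1)) 2 volume :=
          ofReal_sq_le_eLpNorm_oscillatoryOperator_indicator hψ1 hL0.le (by positivity)
            ha_sq hLr
      _ ≤ ENNReal.ofReal (C * L ^ (-δ)) * eLpNorm ((Set.Icc 0 (a ^ 2)).indicator 1) 2 volume :=
          hest _ (memLp_indicator_const 2 measurableSet_Icc 1 (Or.inr (by simp)))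
      _ = ENNReal.ofReal (C * L ^ (-δ) * a) := by
          rw [eLpNorm_indicator_Icc_one (by positivity), sqrt_sq ha0.le, ofReal_mul' ha0.le]
  have hcube : u ^ 3 ≤ 8 * C * L ^ (-δ) := by
    have hu3 : u ^ 3 = 8 * a ^ 3 := by rw [ha]; ring
    rcases ofReal_le_ofReal_iff'.mp hchain with h | h
    · rw [hu3]
      nlinarith [pow_pos ha0 3]
    · nlinarith [pow_pos ha0 4]
  calc L ^ (δ - 1 / 2) = L ^ δ * u ^ 3 := by
        rw [hu_pow, ← rpow_add hL0]
        ring_nf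
    _ ≤ L ^ δ * (8 * C * L ^ (-δ)) := by gcongr
    _ = 8 * C := by
        rw [mul_left_comm, rpow_neg hL0.le, mul_inv_cancel₀ (rpow_pos_of_pos hL0 δ).ne', mul_one]

theorem stmt13_general (δ C : ℝ) (ψ : ℝ → ℝ → ℝ → ℂ)
    (hψ1 : ∀ x y t : ℝ, x ^ 2 + y ^ 2 + t ^ 2 ≤ (1 / 2 : ℝ) ^ 2 → ψ x y t = 1)
    (hest : ∀ L : ℝ, 1 ≤ L → ∀ f : ℝ → ℂ, MemLp f 2 volume →
      eLpNorm (fun p : ℝ × ℝ => ∫ t : ℝ,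
          Complex.exp (Complex.I * (L : ℂ) * (((p.1 * t ^ 2 + p.2 ^ 2 * t : ℝ)) : ℂ)) *
            ψ p.1 p.2 t * f t) 2 volume ≤
        ENNReal.ofReal (C * L ^ (-δ)) * eLpNorm f 2 volume) :
    δ ≤ 1 / 2 :=
  sub_nonpos.mp <| nonpos_of_forall_rpow_le fun L hL =>
    rpow_sub_half_le_of_oscillatoryOperator_bound hψ1 hL (hest L hL)

/-- Sharpness of the `L² → L²` decay: if for a cut-off `ψ` which is `1` on the ball of
radius `1/2` and `0` outside the unit ball, the estimate
`‖𝒪_λ f‖_{L²(ℝ²)} ≤ C λ^{-δ} ‖f‖_{L²}` holds for all `λ ≥ 1` and `f ∈ L²`,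
then `δ ≤ 1/2`. -/
theorem stmt13 (δ C : ℝ) (hC : 0 < C) (ψ : ℝ → ℝ → ℝ → ℂ)
    (hψcont : Continuous (fun p : ℝ × ℝ × ℝ => ψ p.1 p.2.1 p.2.2))
    (hψ1 : ∀ x y t : ℝ, x ^ 2 + y ^ 2 + t ^ 2 ≤ (1 / 2 : ℝ) ^ 2 → ψ x y t = 1)
    (hψ0 : ∀ x y t : ℝ, 1 ≤ x ^ 2 + y ^ 2 + t ^ 2 → ψ x y t = 0)
    (hest : ∀ L : ℝ, 1 ≤ L → ∀ f : ℝ → ℂ, MemLp f 2 volume →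
      eLpNorm (fun p : ℝ × ℝ => ∫ t : ℝ,
          Complex.exp (Complex.I * (L : ℂ) * (((p.1 * t ^ 2 + p.2 ^ 2 * t : ℝ)) : ℂ)) *
            ψ p.1 p.2 t * f t) 2 volume ≤
        ENNReal.ofReal (C * L ^ (-δ)) * eLpNorm f 2 volume) :
    δ ≤ 1 / 2 :=
  stmt13_general δ C ψ hψ1 hest
end

section
/- Let p ≥ 1. Suppose there exist δ ∈ ℝ and C > 0 such that for every λ ≥ 1 and the specific cut-off ψ with ψ = 1 on the ball of radius 1/2 and ψ = 0 outside the unit ball, the estimate ‖∫_ℝ e^{iλ(xt²+y²t)} ψ(x,y,t) f(t) dt‖_{L^p(dx dy)} ≤ C λ^{-δ} ‖f‖_{L²(ℝ)} holds for all f ∈ L²(ℝ). Then δ ≤ 3/(2p). In particular, for p = 6, δ ≤ 1/4, so the L²→L⁶ decay rate 1/4 is sharp. -/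
open MeasureTheory Real ENNReal

/-!
Knapp example. Test the estimate on `f = 𝟙_{[0, 1/4]}`, so `‖f‖₂ ≤ 1`. On the box
`0 ≤ x ≤ λ⁻¹`, `0 ≤ y ≤ λ^{-1/2}` the cut-off equals `1` along the support of `f` and the phase
`λ (x t² + y² t)` stays in `[0, 1]`, so the real part of the oscillatory integral is at least
`1/2` on `[0, 1/4]` and the integral has modulus at least `1/8`. The box has area `λ^{-3/2}`,
whence `‖𝒪_λ f‖_p ≥ λ^{-3/(2p)} / 8`; comparing with `C λ^{-δ}` as `λ → ∞` forces `δ ≤ 3/(2p)`.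
-/

section

variable {α : Type*} [MeasurableSpace α] {μ : Measure α}

theorem half_measureReal_le_norm_setIntegral_exp_mul_I {s : Set α} (hs : MeasurableSet s)
    (hμs : μ s ≠ ∞) {φ : α → ℝ} (hφ : Measurable φ) (hφ1 : ∀ x ∈ s, |φ x| ≤ 1) :
    μ.real s / 2 ≤ ‖∫ x in s, Complex.exp (φ x * Complex.I) ∂μ‖ := by
  have hint : IntegrableOn (fun x => Complex.exp (φ x * Complex.I)) s μ :=
    Measure.integrableOn_of_bounded (M := 1) hμs
      (by fun_prop) (ae_of_all _ fun x => (Complex.norm_exp_ofReal_mul_I _).le)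
  have hcos : ∀ x ∈ s, 1 / 2 ≤ (Complex.exp (φ x * Complex.I)).re := by
    intro x hx
    rw [Complex.exp_ofReal_mul_I_re]
    nlinarith [one_sub_sq_div_two_le_cos (x := φ x), sq_abs (φ x), abs_nonneg (φ x), hφ1 x hx]
  calc μ.real s / 2 = μ.real s • (1 / 2 : ℝ) := by rw [smul_eq_mul]; ring
    _ ≤ ∫ x in s, (Complex.exp (φ x * Complex.I)).re ∂μ :=
      setIntegral_ge_of_const_le hs hμs hcos hint.re
    _ = (∫ x in s, Complex.exp (φ x * Complex.I) ∂μ).re := integral_re hint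
    _ ≤ _ := Complex.re_le_norm _

theorem mul_measure_rpow_le_eLpNorm {E : Type*} [NormedAddCommGroup E] {g : α → E}
    {p : ℝ≥0∞} (hp0 : p ≠ 0) (hp : p ≠ ∞) {B : Set α} (hB : MeasurableSet B) {c : ℝ≥0∞}
    (hc : ∀ z ∈ B, c ≤ ‖g z‖ₑ) :
    c * μ B ^ (1 / p.toReal) ≤ eLpNorm g p μ := by
  calc c * μ B ^ (1 / p.toReal) = eLpNorm (B.indicator fun _ => c) p μ := by
        rw [eLpNorm_indicator_const hB hp0 hp, enorm_eq_self]
    _ ≤ eLpNorm g p μ := eLpNorm_mono_enorm fun z => by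
        by_cases hz : z ∈ B
        · simpa [Set.indicator_of_mem hz] using hc z hz
        · simp [Set.indicator_of_notMem hz]

end

theorem le_of_forall_const_mul_rpow_neg_le {α δ c C L₀ : ℝ} (hc : 0 < c)
    (h : ∀ L, L₀ ≤ L → c * L ^ (-α) ≤ C * L ^ (-δ)) : δ ≤ α := by
  by_contra! hlt
  obtain ⟨L, hLbig, hL₀, hL⟩ :=
    ((tendsto_rpow_atTop (sub_pos.2 hlt)).eventually_gt_atTop (C / c) |>.and <|
      (Filter.eventually_ge_atTop L₀).and (Filter.eventually_gt_atTop 0)).exists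
  have hsplit : L ^ (-α) = L ^ (δ - α) * L ^ (-δ) := by rw [← rpow_add hL]; ring_nf
  have hle : c * L ^ (δ - α) ≤ C := le_of_mul_le_mul_right
    (by rw [mul_assoc, ← hsplit]; exact h L hL₀) (rpow_pos_of_pos hL _)
  rw [div_lt_iff₀' hc] at hLbig
  linarith

noncomputable def oscillatoryOp (L : ℝ) (ψ : ℝ → ℝ → ℝ → ℂ) (f : ℝ → ℂ) (z : ℝ × ℝ) : ℂ :=
  ∫ t : ℝ, Complex.exp (Complex.I * (L : ℂ) * (((z.1 * t ^ 2 + z.2 ^ 2 * t : ℝ)) : ℂ)) *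
    ψ z.1 z.2 t * f t

theorem norm_oscillatoryOp_indicator_ge {ψ : ℝ → ℝ → ℝ → ℂ} {L : ℝ}
    (hψ1 : ∀ x y t : ℝ, x ^ 2 + y ^ 2 + t ^ 2 ≤ (1 / 2 : ℝ) ^ 2 → ψ x y t = 1)
    (hL : 16 ≤ L) {x y : ℝ} (hx : x ∈ Set.Icc 0 L⁻¹) (hy : y ^ 2 ≤ L⁻¹) :
    1 / 8 ≤ ‖oscillatoryOp L ψ ((Set.Icc (0 : ℝ) (1 / 4)).indicator (fun _ => 1)) (x, y)‖ := by
  obtain ⟨hx0, hxL⟩ := hx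
  have hLinv : L⁻¹ ≤ 1 / 16 := by rw [one_div]; exact inv_anti₀ (by norm_num) hL
  have hL0 : 0 < L := by linarith
  set φ : ℝ → ℝ := fun t => L * (x * t ^ 2 + y ^ 2 * t)
  have hintegrand :
      (fun t : ℝ => Complex.exp (Complex.I * (L : ℂ) * (((x * t ^ 2 + y ^ 2 * t : ℝ)) : ℂ)) *
        ψ x y t * (Set.Icc (0 : ℝ) (1 / 4)).indicator (fun _ => 1) t) =
      (Set.Icc (0 : ℝ) (1 / 4)).indicator fun t => Complex.exp (φ t * Complex.I) := by
    funext t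
    by_cases ht : t ∈ Set.Icc (0 : ℝ) (1 / 4)
    · rw [Set.indicator_of_mem ht, Set.indicator_of_mem ht,
        hψ1 x y t (by nlinarith [ht.1, ht.2]), mul_one, mul_one]
      push_cast [φ]
      ring_nf
    · rw [Set.indicator_of_notMem ht, Set.indicator_of_notMem ht, mul_zero]
  have hφ : ∀ t ∈ Set.Icc (0 : ℝ) (1 / 4), |φ t| ≤ 1 := by
    rintro t ⟨ht0, ht4⟩
    have hxt : x * t ^ 2 ≤ L⁻¹ * (1 / 16) :=
      mul_le_mul hxL (by nlinarith) (sq_nonneg t) (by positivity)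
    have hyt : y ^ 2 * t ≤ L⁻¹ * (1 / 4) := mul_le_mul hy ht4 ht0 (by positivity)
    rw [abs_le]
    constructor
    · nlinarith [mul_nonneg hx0 (sq_nonneg t), mul_nonneg (sq_nonneg y) ht0]
    · calc φ t ≤ L * (L⁻¹ * (1 / 16) + L⁻¹ * (1 / 4)) := by
            simp only [φ]; gcongr
        _ ≤ 1 := by field_simp; norm_num
  have := half_measureReal_le_norm_setIntegral_exp_mul_I (μ := volume) measurableSet_Icc
    (by simp) (by fun_prop) hφ
  rw [oscillatoryOp, hintegrand, integral_indicator measurableSet_Icc]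
  convert this using 1
  norm_num [Real.volume_real_Icc]

theorem eLpNorm_oscillatoryOp_indicator_ge {ψ : ℝ → ℝ → ℝ → ℂ}
    (hψ1 : ∀ x y t : ℝ, x ^ 2 + y ^ 2 + t ^ 2 ≤ (1 / 2 : ℝ) ^ 2 → ψ x y t = 1)
    {p L : ℝ} (hp : 0 < p) (hL : 16 ≤ L) :
    ENNReal.ofReal (1 / 8 * L ^ (-(3 / (2 * p)))) ≤
      eLpNorm (oscillatoryOp L ψ ((Set.Icc (0 : ℝ) (1 / 4)).indicator (fun _ => 1)))
        (ENNReal.ofReal p) volume := by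
  have hL0 : 0 < L := by linarith
  set b : ℝ := L ^ (-(1 / 2) : ℝ)
  have hb2 : b ^ 2 = L⁻¹ := by
    rw [← Real.rpow_natCast, ← rpow_mul hL0.le]
    norm_num [Real.rpow_neg_one]
  have hbox : volume (Set.Icc 0 L⁻¹ ×ˢ Set.Icc 0 b) = ENNReal.ofReal (L ^ (-(3 / 2) : ℝ)) := by
    rw [Measure.volume_eq_prod, Measure.prod_prod, Real.volume_Icc, Real.volume_Icc, sub_zero,
      sub_zero, ← ENNReal.ofReal_mul (by positivity), ← Real.rpow_neg_one, ← rpow_add hL0]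
    norm_num
  calc ENNReal.ofReal (1 / 8 * L ^ (-(3 / (2 * p))))
      = ENNReal.ofReal (1 / 8) *
          volume (Set.Icc 0 L⁻¹ ×ˢ Set.Icc 0 b) ^ (1 / (ENNReal.ofReal p).toReal) := by
        rw [hbox, ENNReal.toReal_ofReal hp.le, ENNReal.ofReal_rpow_of_nonneg (by positivity)
          (by positivity), ← rpow_mul hL0.le, ENNReal.ofReal_mul (by norm_num)]
        congr 3
        field_simp
    _ ≤ _ := by
      refine mul_measure_rpow_le_eLpNorm (by simpa using hp) ENNReal.ofReal_ne_top
        (measurableSet_Icc.prod measurableSet_Icc) ?_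
      rintro ⟨x, y⟩ ⟨hx, hy0, hyb⟩
      rw [← ofReal_norm]
      refine ENNReal.ofReal_le_ofReal (norm_oscillatoryOp_indicator_ge hψ1 hL hx ?_)
      rw [← hb2]
      gcongr

theorem stmt14_general (p : ℝ) (hp : 1 ≤ p) (δ C : ℝ) (ψ : ℝ → ℝ → ℝ → ℂ)
    (hψ1 : ∀ x y t : ℝ, x ^ 2 + y ^ 2 + t ^ 2 ≤ (1 / 2 : ℝ) ^ 2 → ψ x y t = 1)
    (hest : ∀ L : ℝ, 1 ≤ L → ∀ f : ℝ → ℂ, MemLp f 2 volume →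
      eLpNorm (fun z : ℝ × ℝ => ∫ t : ℝ,
          Complex.exp (Complex.I * (L : ℂ) * (((z.1 * t ^ 2 + z.2 ^ 2 * t : ℝ)) : ℂ)) *
            ψ z.1 z.2 t * f t) (ENNReal.ofReal p) volume ≤
        ENNReal.ofReal (C * L ^ (-δ)) * eLpNorm f 2 volume) :
    δ ≤ 3 / (2 * p) := by
  set f : ℝ → ℂ := (Set.Icc (0 : ℝ) (1 / 4)).indicator (fun _ => 1)
  have hf : MemLp f 2 volume :=
    memLp_indicator_const 2 measurableSet_Icc 1 (Or.inr (by simp))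
  have hf1 : eLpNorm f 2 volume ≤ 1 := by
    rw [eLpNorm_indicator_const measurableSet_Icc (by norm_num) (by norm_num)]
    simp only [enorm_one, one_mul, Real.volume_Icc]
    exact ENNReal.rpow_le_one (ENNReal.ofReal_le_one.mpr (by norm_num)) (by norm_num)
  refine le_of_forall_const_mul_rpow_neg_le (c := 1 / 8) (C := C) (L₀ := 16) (by norm_num)
    fun L hL => ?_
  have hL0 : 0 < L := by linarith
  have h := (eLpNorm_oscillatoryOp_indicator_ge hψ1 (by linarith) hL).trans
    ((hest L (by linarith) f hf).trans (mul_le_of_le_one_right' hf1))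
  exact (ENNReal.ofReal_le_ofReal_iff'.mp h).resolve_right (not_le.mpr (by positivity))

/-- Sharpness of the `L² → L^p` decay: if for a cut-off `ψ` which is `1` on the ball of
radius `1/2` and `0` outside the unit ball, the estimate
`‖𝒪_λ f‖_{L²(ℝ²)} ≤ C λ^{-δ} ‖f‖_{L²}` holds for all `λ ≥ 1` and `f ∈ L²`,
then `δ ≤ 3/(2p)`. In particular for `p = 6` this gives `δ ≤ 1/4`. -/
theorem stmt14 (p : ℝ) (hp : 1 ≤ p) (δ C : ℝ) (hC : 0 < C) (ψ : ℝ → ℝ → ℝ → ℂ)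
    (hψcont : Continuous (fun p : ℝ × ℝ × ℝ => ψ p.1 p.2.1 p.2.2))
    (hψ1 : ∀ x y t : ℝ, x ^ 2 + y ^ 2 + t ^ 2 ≤ (1 / 2 : ℝ) ^ 2 → ψ x y t = 1)
    (hψ0 : ∀ x y t : ℝ, 1 ≤ x ^ 2 + y ^ 2 + t ^ 2 → ψ x y t = 0)
    (hest : ∀ L : ℝ, 1 ≤ L → ∀ f : ℝ → ℂ, MemLp f 2 volume →
      eLpNorm (fun z : ℝ × ℝ => ∫ t : ℝ,
          Complex.exp (Complex.I * (L : ℂ) * (((z.1 * t ^ 2 + z.2 ^ 2 * t : ℝ)) : ℂ)) *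
            ψ z.1 z.2 t * f t) (ENNReal.ofReal p) volume ≤
        ENNReal.ofReal (C * L ^ (-δ)) * eLpNorm f 2 volume) :
    δ ≤ 3 / (2 * p) :=
  stmt14_general p hp δ C ψ hψ1 hest
end

section
/- For every λ > 0 and all real numbers A, B with (A,B) ≠ (0,0), and every C¹ function φ on ℝ supported in [-1,1], |∫_ℝ e^{iλ(At² + Bt)} φ(t) dt| ≤ C (λ(|A| + |B|))^{-1/2} sup_{|t|≤1}(|φ(t)| + |φ'(t)|) for an absolute constant C. -/
/-!
Write `ψ(t) = A t² + B t`. Where `|ψ'| ≥ m`, integrating by parts against `φ / (iλψ')` gives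
the van der Corput bound `O(M / (λ m))`; since `ψ'` is affine, `∫ |ψ''| / ψ'²` telescopes to
at most `2 / m`. If `|B| ≥ 4|A|` then `|ψ'| ≥ |B|/2` on `[-1, 1]`, which together with the trivial
bound `2M` gives `O(M (λ|B|)^{-1/2})`. Otherwise `A ≠ 0` and `ψ'` vanishes only at
`c = -B/(2A)`: on `|t - c| ≤ δ` use the trivial bound `2δM`, and on the two remaining half-lines
`|ψ'| ≥ 2|A|δ`; the choice `δ = (λ|A|)^{-1/2}` balances the two and gives `O(M (λ|A|)^{-1/2})`.
In both cases `|A| + |B|` is comparable to the dominant coefficient.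
-/

open MeasureTheory Real Set intervalIntegral

noncomputable def quadChirp (L A B t : ℝ) : ℂ :=
  Complex.exp (Complex.I * L * ((A * t ^ 2 + B * t : ℝ) : ℂ))

noncomputable def quadChirpLogDeriv (L A B t : ℝ) : ℂ :=
  Complex.I * L * ((2 * A * t + B : ℝ) : ℂ)

lemma norm_quadChirp (L A B t : ℝ) : ‖quadChirp L A B t‖ = 1 := by
  rw [quadChirp, show Complex.I * L * ((A * t ^ 2 + B * t : ℝ) : ℂ)
    = ((L * (A * t ^ 2 + B * t) : ℝ) : ℂ) * Complex.I by push_cast; ring]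
  exact Complex.norm_exp_ofReal_mul_I _

lemma hasDerivAt_quadChirp (L A B t : ℝ) :
    HasDerivAt (quadChirp L A B) (quadChirpLogDeriv L A B t * quadChirp L A B t) t := by
  have hψ : HasDerivAt (fun t : ℝ => A * t ^ 2 + B * t) (2 * A * t + B) t := by
    refine (((hasDerivAt_pow 2 t).const_mul A).add ((hasDerivAt_id t).const_mul B)).congr_deriv ?_
    ring
  refine (hψ.ofReal_comp.const_mul (Complex.I * L)).cexp.congr_deriv ?_
  rw [quadChirp, quadChirpLogDeriv]; ring

lemma continuous_quadChirp (L A B : ℝ) : Continuous (quadChirp L A B) :=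
  continuous_iff_continuousAt.2 fun t => (hasDerivAt_quadChirp L A B t).continuousAt

lemma norm_I_mul_ofReal_mul_ofReal {L : ℝ} (hL : 0 < L) (x : ℝ) :
    ‖Complex.I * L * (x : ℂ)‖ = L * |x| := by
  simp [abs_of_pos hL]

lemma hasDerivAt_quadChirpLogDeriv (L A B t : ℝ) :
    HasDerivAt (quadChirpLogDeriv L A B) (Complex.I * L * ((2 * A : ℝ) : ℂ)) t := by
  refine ((((hasDerivAt_id t).const_mul (2 * A)).add_const B).ofReal_comp.const_mul
    (Complex.I * L)).congr_deriv ?_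
  simp

lemma continuous_quadChirpLogDeriv (L A B : ℝ) : Continuous (quadChirpLogDeriv L A B) :=
  continuous_iff_continuousAt.2 fun t => (hasDerivAt_quadChirpLogDeriv L A B t).continuousAt

lemma norm_integral_mul_deriv_le {A : Type*} [NormedRing A] [NormedAlgebra ℝ A]
    [CompleteSpace A] {u v u' v' : ℝ → A} {a b : ℝ} (hab : a ≤ b)
    (hu : ∀ x ∈ Icc a b, HasDerivAt u (u' x) x) (hv : ∀ x ∈ Icc a b, HasDerivAt v (v' x) x)
    (hu' : IntervalIntegrable u' volume a b) (hv' : IntervalIntegrable v' volume a b)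
    (hv₁ : ∀ x ∈ Icc a b, ‖v x‖ ≤ 1) :
    ‖∫ x in a..b, u x * v' x‖ ≤ ‖u a‖ + ‖u b‖ + ∫ x in a..b, ‖u' x‖ := by
  have hnorm : ∀ x ∈ Icc a b, ‖u x * v x‖ ≤ ‖u x‖ := fun x hx =>
    (norm_mul_le _ _).trans (mul_le_of_le_one_right (norm_nonneg _) (hv₁ x hx))
  have hint : ‖∫ x in a..b, u' x * v x‖ ≤ ∫ x in a..b, ‖u' x‖ :=
    norm_integral_le_of_norm_le hab (Filter.Eventually.of_forall fun x hx =>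
      (norm_mul_le _ _).trans (mul_le_of_le_one_right (norm_nonneg _)
        (hv₁ x (Ioc_subset_Icc_self hx)))) hu'.norm
  rw [integral_mul_deriv_eq_deriv_mul (by rwa [uIcc_of_le hab]) (by rwa [uIcc_of_le hab]) hu' hv']
  have := hnorm a (left_mem_Icc.2 hab)
  have := hnorm b (right_mem_Icc.2 hab)
  calc _ ≤ ‖u b * v b‖ + ‖u a * v a‖ + ‖∫ x in a..b, u' x * v x‖ :=
        (norm_sub_le _ _).trans (by gcongr; exact norm_sub_le _ _)
    _ ≤ _ := by linarith

lemma integral_abs_div_sq_le {α β m a b : ℝ} (hab : a ≤ b) (hm : 0 < m)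
    (hp : ∀ t ∈ Icc a b, m ≤ |α * t + β|) :
    ∫ t in a..b, |α| / (α * t + β) ^ 2 ≤ 2 / m := by
  have hp₀ : ∀ t ∈ uIcc a b, α * t + β ≠ 0 := fun t ht h => by
    have := hp t (by rwa [uIcc_of_le hab] at ht); rw [h, abs_zero] at this; linarith
  have hFTC : ∫ t in a..b, α / (α * t + β) ^ 2 = (α * a + β)⁻¹ - (α * b + β)⁻¹ := by
    rw [integral_eq_sub_of_hasDerivAt (f := fun t => -(α * t + β)⁻¹)]
    · ring
    · intro t ht
      refine ((((hasDerivAt_id t).const_mul α).add_const β).inv (hp₀ t ht)).neg.congr_deriv ?_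
      simp [neg_div]
    · exact (ContinuousOn.div continuousOn_const (by fun_prop)
        fun t ht => pow_ne_zero 2 (hp₀ t ht)).intervalIntegrable
  have hinv : ∀ t ∈ Icc a b, |(α * t + β)⁻¹| ≤ m⁻¹ := fun t ht => by
    rw [abs_inv]; exact inv_anti₀ hm (hp t ht)
  have hdiff : |(α * a + β)⁻¹ - (α * b + β)⁻¹| ≤ 2 / m := by
    have := hinv a (left_mem_Icc.2 hab); have := hinv b (right_mem_Icc.2 hab)
    calc _ ≤ _ := abs_sub _ _
      _ ≤ m⁻¹ + m⁻¹ := add_le_add ‹_› ‹_›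
      _ = 2 / m := by ring
  rcases abs_cases α with ⟨hα, -⟩ | ⟨hα, -⟩ <;>
    simp only [hα, neg_div, intervalIntegral.integral_neg, hFTC]
  · exact (le_abs_self _).trans hdiff
  · exact (neg_le_abs _).trans hdiff

lemma norm_div_sub_mul_div_sq_le {𝕜 : Type*} [NormedField 𝕜] {d f k k' : 𝕜} {m M : ℝ}
    (hm : 0 < m) (hk : m ≤ ‖k‖) (hf : ‖f‖ ≤ M) :
    ‖d / k - f * k' / k ^ 2‖ ≤ ‖d‖ / m + M * ‖k'‖ / ‖k‖ ^ 2 := by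
  refine (norm_sub_le _ _).trans (add_le_add ?_ ?_)
  · rw [norm_div]; exact div_le_div_of_nonneg_left (norm_nonneg _) hm hk
  · rw [norm_div, norm_mul, norm_pow]; gcongr

section FirstDerivativeBound

variable {L A B m a b M : ℝ} {φ : ℝ → ℂ}

lemma le_norm_quadChirpLogDeriv (hL : 0 < L) (hp : ∀ t ∈ Icc a b, m ≤ |2 * A * t + B|) :
    ∀ t ∈ Icc a b, L * m ≤ ‖quadChirpLogDeriv L A B t‖ := fun t ht => by
  rw [quadChirpLogDeriv, norm_I_mul_ofReal_mul_ofReal hL]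
  exact mul_le_mul_of_nonneg_left (hp t ht) hL.le

lemma quadChirpLogDeriv_ne_zero (hL : 0 < L) (hm : 0 < m)
    (hp : ∀ t ∈ Icc a b, m ≤ |2 * A * t + B|) : ∀ t ∈ Icc a b, quadChirpLogDeriv L A B t ≠ 0 :=
  fun t ht => norm_pos_iff.1 ((mul_pos hL hm).trans_le (le_norm_quadChirpLogDeriv hL hp t ht))

lemma continuousOn_deriv_div_quadChirpLogDeriv (hL : 0 < L) (hφ : ContDiff ℝ 1 φ) (hm : 0 < m)
    (hp : ∀ t ∈ Icc a b, m ≤ |2 * A * t + B|) :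
    ContinuousOn (fun t => deriv φ t / quadChirpLogDeriv L A B t
      - φ t * (Complex.I * L * ((2 * A : ℝ) : ℂ)) / quadChirpLogDeriv L A B t ^ 2) (Icc a b) :=
  have hK₀ := quadChirpLogDeriv_ne_zero hL hm hp
  have hKc := continuous_quadChirpLogDeriv L A B
  ((hφ.continuous_deriv le_rfl).continuousOn.div hKc.continuousOn hK₀).sub
    ((hφ.continuous.continuousOn.mul continuousOn_const).div (hKc.pow 2).continuousOn
      fun t ht => pow_ne_zero 2 (hK₀ t ht))

lemma integral_norm_deriv_div_quadChirpLogDeriv_le (hL : 0 < L) (hφ : ContDiff ℝ 1 φ)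
    (hab : a ≤ b) (hm : 0 < m) (hp : ∀ t ∈ Icc a b, m ≤ |2 * A * t + B|)
    (hM : ∀ t ∈ Icc a b, ‖φ t‖ ≤ M) :
    ∫ t in a..b, ‖deriv φ t / quadChirpLogDeriv L A B t
        - φ t * (Complex.I * L * ((2 * A : ℝ) : ℂ)) / quadChirpLogDeriv L A B t ^ 2‖
      ≤ (2 * M + ∫ t in a..b, ‖deriv φ t‖) / (L * m) := by
  have hφ' := (hφ.continuous_deriv le_rfl).norm
  have hq : ContinuousOn (fun t => |2 * A| / (2 * A * t + B) ^ 2) (Icc a b) :=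
    continuousOn_const.div (by fun_prop) fun t ht => pow_ne_zero 2 fun h => by
      have := hp t ht; rw [h, abs_zero] at this; linarith
  have hM₀ : 0 ≤ M := (norm_nonneg _).trans (hM a (left_mem_Icc.2 hab))
  calc _ ≤ ∫ t in a..b, (‖deriv φ t‖ / (L * m) + M / L * (|2 * A| / (2 * A * t + B) ^ 2)) := by
        refine integral_mono_on hab ((continuousOn_deriv_div_quadChirpLogDeriv hL hφ hm hp).norm
          |>.intervalIntegrable_of_Icc hab)
          ((hφ'.div_const _).intervalIntegrable a b |>.add
            ((hq.intervalIntegrable_of_Icc hab).const_mul _)) fun t ht => ?_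
        refine (norm_div_sub_mul_div_sq_le (mul_pos hL hm)
          (le_norm_quadChirpLogDeriv hL hp t ht) (hM t ht)).trans_eq ?_
        have : 0 < |2 * A * t + B| := hm.trans_le (hp t ht)
        rw [quadChirpLogDeriv, norm_I_mul_ofReal_mul_ofReal hL,
          norm_I_mul_ofReal_mul_ofReal hL, ← sq_abs (2 * A * t + B)]
        field_simp
    _ = (∫ t in a..b, ‖deriv φ t‖) / (L * m)
          + M / L * ∫ t in a..b, |2 * A| / (2 * A * t + B) ^ 2 := by
        rw [integral_add ((hφ'.div_const _).intervalIntegrable a b)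
          ((hq.intervalIntegrable_of_Icc hab).const_mul _), intervalIntegral.integral_div,
          intervalIntegral.integral_const_mul]
    _ ≤ (∫ t in a..b, ‖deriv φ t‖) / (L * m) + M / L * (2 / m) := by
        gcongr; exact integral_abs_div_sq_le hab hm hp
    _ = _ := by field_simp; ring

lemma norm_integral_quadChirp_mul_le_of_le_abs (hL : 0 < L) (hφ : ContDiff ℝ 1 φ)
    (hab : a ≤ b) (hm : 0 < m) (hp : ∀ t ∈ Icc a b, m ≤ |2 * A * t + B|)
    (hM : ∀ t ∈ Icc a b, ‖φ t‖ ≤ M) :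
    ‖∫ t in a..b, quadChirp L A B t * φ t‖ ≤ (4 * M + ∫ t in a..b, ‖deriv φ t‖) / (L * m) := by
  have hK₀ := quadChirpLogDeriv_ne_zero hL hm hp
  set K := quadChirpLogDeriv L A B
  have hu : ∀ t ∈ Icc a b, HasDerivAt (fun t => φ t / K t) (deriv φ t / K t
      - φ t * (Complex.I * L * ((2 * A : ℝ) : ℂ)) / K t ^ 2) t := fun t ht =>
    ((hφ.differentiable one_ne_zero t).hasDerivAt.div (hasDerivAt_quadChirpLogDeriv L A B t)
      (hK₀ t ht)).congr_deriv (by simp only [K] at hK₀ ⊢; field_simp [hK₀ t ht])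
  have hu_le : ∀ t ∈ Icc a b, ‖φ t / K t‖ ≤ M / (L * m) := fun t ht => by
    rw [norm_div]
    exact div_le_div₀ ((norm_nonneg _).trans (hM t ht)) (hM t ht) (by positivity)
      (le_norm_quadChirpLogDeriv hL hp t ht)
  rw [integral_congr fun t ht => show quadChirp L A B t * φ t
      = φ t / K t * (K t * quadChirp L A B t) by
    rw [uIcc_of_le hab] at ht; field_simp [hK₀ t ht]]
  refine (norm_integral_mul_deriv_le hab hu (fun t _ => hasDerivAt_quadChirp L A B t) ?_
    (((continuous_quadChirpLogDeriv L A B).mul (continuous_quadChirp L A B)).intervalIntegrable a b)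
    (fun t _ => (norm_quadChirp L A B t).le)).trans ?_
  · exact (continuousOn_deriv_div_quadChirpLogDeriv hL hφ hm hp).intervalIntegrable_of_Icc hab
  · have := hu_le a (left_mem_Icc.2 hab)
    have := hu_le b (right_mem_Icc.2 hab)
    have := integral_norm_deriv_div_quadChirpLogDeriv_le hL hφ hab hm hp hM
    have : (4 * M + ∫ t in a..b, ‖deriv φ t‖) / (L * m) = M / (L * m) + M / (L * m)
        + (2 * M + ∫ t in a..b, ‖deriv φ t‖) / (L * m) := by
      field_simp; ring
    linarith

end FirstDerivativeBound

lemma integral_eq_intervalIntegral_of_support_subset {E : Type*} [NormedAddCommGroup E]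
    [NormedSpace ℝ E] {f : ℝ → E} {a b : ℝ} (hab : a ≤ b) (h : Function.support f ⊆ Icc a b) :
    ∫ x, f x = ∫ x in a..b, f x := by
  rw [integral_of_le hab, ← integral_Icc_eq_integral_Ioc,
    setIntegral_eq_integral_of_forall_compl_eq_zero fun x hx => Function.notMem_support.1
      fun h' => hx (h h')]

section SupportedAmplitude

variable {φ : ℝ → ℂ} {M : ℝ}

lemma norm_le_of_support_subset_Icc (hsupp : Function.support φ ⊆ Icc (-1) 1)
    (hM : ∀ t ∈ Icc (-1 : ℝ) 1, ‖φ t‖ + ‖deriv φ t‖ ≤ M) (t : ℝ) : ‖φ t‖ ≤ M := by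
  by_cases ht : t ∈ Icc (-1 : ℝ) 1
  · linarith [hM t ht, norm_nonneg (deriv φ t)]
  · rw [Function.notMem_support.1 fun h => ht (hsupp h), norm_zero]
    linarith [hM 0 ⟨by norm_num, by norm_num⟩, norm_nonneg (φ 0), norm_nonneg (deriv φ 0)]

lemma intervalIntegral_norm_deriv_le (hφ : ContDiff ℝ 1 φ)
    (hsupp : Function.support φ ⊆ Icc (-1) 1)
    (hM : ∀ t ∈ Icc (-1 : ℝ) 1, ‖φ t‖ + ‖deriv φ t‖ ≤ M) {a b : ℝ} (hab : a ≤ b) :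
    ∫ t in a..b, ‖deriv φ t‖ ≤ 2 * M := by
  have hsupp' : Function.support (fun t => ‖deriv φ t‖) ⊆ Icc (-1) 1 := fun t ht =>
    closure_minimal hsupp isClosed_Icc (support_deriv_subset (by simpa using ht))
  have hint : Integrable fun t => ‖deriv φ t‖ :=
    (hφ.continuous_deriv le_rfl).norm.integrable_of_hasCompactSupport
      (HasCompactSupport.intro isCompact_Icc fun t ht =>
        Function.notMem_support.1 fun h => ht (hsupp' h))
  calc ∫ t in a..b, ‖deriv φ t‖ ≤ ∫ t, ‖deriv φ t‖ := by
        rw [integral_of_le hab]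
        exact setIntegral_le_integral hint (Filter.Eventually.of_forall fun _ => norm_nonneg _)
    _ = ∫ t in (-1)..1, ‖deriv φ t‖ :=
        integral_eq_intervalIntegral_of_support_subset (by norm_num) hsupp'
    _ ≤ M * |1 - (-1)| := by
        refine (le_abs_self _).trans ?_
        rw [← Real.norm_eq_abs]
        exact norm_integral_le_of_norm_le_const fun t ht => by
          rw [uIoc_of_le (by norm_num)] at ht
          simpa using (le_add_of_nonneg_left (norm_nonneg _)).trans (hM t (Ioc_subset_Icc_self ht))
    _ = 2 * M := by norm_num; ring

end SupportedAmplitude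

section Regimes

variable {L A B : ℝ} {φ : ℝ → ℂ} {M : ℝ}

lemma integral_quadChirp_mul_eq_intervalIntegral (hsupp : Function.support φ ⊆ Icc (-1) 1)
    {a b : ℝ} (ha : a ≤ -1) (hb : 1 ≤ b) :
    ∫ t, quadChirp L A B t * φ t = ∫ t in a..b, quadChirp L A B t * φ t :=
  integral_eq_intervalIntegral_of_support_subset (by linarith)
    ((Function.support_mul_subset_right _ _).trans (hsupp.trans (Icc_subset_Icc ha hb)))

lemma norm_intervalIntegral_quadChirp_mul_le (hsupp : Function.support φ ⊆ Icc (-1) 1)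
    (hM : ∀ t ∈ Icc (-1 : ℝ) 1, ‖φ t‖ + ‖deriv φ t‖ ≤ M) (a b : ℝ) :
    ‖∫ t in a..b, quadChirp L A B t * φ t‖ ≤ M * |b - a| :=
  norm_integral_le_of_norm_le_const fun t _ => by
    rw [norm_mul, norm_quadChirp, one_mul]; exact norm_le_of_support_subset_Icc hsupp hM t

lemma norm_intervalIntegral_quadChirp_mul_le_of_le_abs (hL : 0 < L) (hφ : ContDiff ℝ 1 φ)
    (hsupp : Function.support φ ⊆ Icc (-1) 1)
    (hM : ∀ t ∈ Icc (-1 : ℝ) 1, ‖φ t‖ + ‖deriv φ t‖ ≤ M) {a b m : ℝ} (hab : a ≤ b) (hm : 0 < m)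
    (hp : ∀ t ∈ Icc a b, m ≤ |2 * A * t + B|) :
    ‖∫ t in a..b, quadChirp L A B t * φ t‖ ≤ 6 * M / (L * m) := by
  refine (norm_integral_quadChirp_mul_le_of_le_abs hL hφ hab hm hp
    fun t _ => norm_le_of_support_subset_Icc hsupp hM t).trans ?_
  gcongr
  linarith [intervalIntegral_norm_deriv_le hφ hsupp hM hab]

lemma norm_integral_quadChirp_mul_le_of_four_mul_abs_le (hL : 0 < L) (hφ : ContDiff ℝ 1 φ)
    (hsupp : Function.support φ ⊆ Icc (-1) 1)
    (hM : ∀ t ∈ Icc (-1 : ℝ) 1, ‖φ t‖ + ‖deriv φ t‖ ≤ M) (hB : B ≠ 0) (hAB : 4 * |A| ≤ |B|) :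
    ‖∫ t, quadChirp L A B t * φ t‖ ≤ 5 * M / √(L * |B|) := by
  have hM₀ : 0 ≤ M := (norm_nonneg _).trans (norm_le_of_support_subset_Icc hsupp hM 0)
  set s := √(L * |B|)
  have hs : 0 < s := Real.sqrt_pos.2 (by positivity)
  have hs2 : s ^ 2 = L * |B| := Real.sq_sqrt (by positivity)
  rw [integral_quadChirp_mul_eq_intervalIntegral hsupp le_rfl le_rfl]
  rcases le_total s (5 / 2) with hs5 | hs5
  · calc _ ≤ M * |1 - (-1)| := norm_intervalIntegral_quadChirp_mul_le hsupp hM _ _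
      _ ≤ 5 * M / s := by rw [le_div_iff₀ hs]; norm_num; nlinarith
  · have hp : ∀ t ∈ Icc (-1 : ℝ) 1, |B| / 2 ≤ |2 * A * t + B| := fun t ht => by
      have h2At : |2 * A * t| ≤ 2 * |A| := by
        rw [abs_mul, abs_mul, abs_two]
        nlinarith [abs_le.2 ht, abs_nonneg A]
      have h := abs_sub (2 * A * t + B) (2 * A * t)
      rw [add_sub_cancel_left] at h
      linarith
    calc _ ≤ 6 * M / (L * (|B| / 2)) :=
          norm_intervalIntegral_quadChirp_mul_le_of_le_abs hL hφ hsupp hM (by norm_num)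
            (by positivity) hp
      _ = 12 * M / s ^ 2 := by rw [hs2]; ring
      _ ≤ 5 * M / s := by
          rw [div_le_div_iff₀ (by positivity) hs]
          nlinarith [mul_nonneg (mul_nonneg hM₀ hs.le) (by linarith : (0 : ℝ) ≤ 5 * s - 12)]

lemma norm_integral_quadChirp_mul_le_of_ne_zero (hL : 0 < L) (hφ : ContDiff ℝ 1 φ)
    (hsupp : Function.support φ ⊆ Icc (-1) 1)
    (hM : ∀ t ∈ Icc (-1 : ℝ) 1, ‖φ t‖ + ‖deriv φ t‖ ≤ M) (hA : A ≠ 0) :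
    ‖∫ t, quadChirp L A B t * φ t‖ ≤ 8 * M / √(L * |A|) := by
  set s := √(L * |A|)
  have hs : 0 < s := Real.sqrt_pos.2 (by positivity)
  have hs2 : s ^ 2 = L * |A| := Real.sq_sqrt (by positivity)
  set c := -B / (2 * A)
  have hp : ∀ t, |2 * A * t + B| = 2 * |A| * |t - c| := fun t => by
    rw [← abs_two, ← abs_mul, ← abs_mul]; congr 1; simp only [c]; field_simp; ring
  have hout : ∀ a b, a ≤ b → (∀ t ∈ Icc a b, s⁻¹ ≤ |t - c|) →
      ‖∫ t in a..b, quadChirp L A B t * φ t‖ ≤ 3 * M / s := fun a b hab h => by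
    refine (norm_intervalIntegral_quadChirp_mul_le_of_le_abs hL hφ hsupp hM hab
      (m := 2 * |A| * s⁻¹) (by positivity) fun t ht => by
        rw [hp]; gcongr; exact h t ht).trans_eq ?_
    rw [show L * (2 * |A| * s⁻¹) = 2 * s by field_simp; linear_combination -hs2]
    field_simp; ring
  have hI : ∀ a b, IntervalIntegrable (fun t => quadChirp L A B t * φ t) volume a b :=
    fun a b => ((continuous_quadChirp L A B).mul hφ.continuous).intervalIntegrable a b
  rw [integral_quadChirp_mul_eq_intervalIntegral hsupp (min_le_left (-1) (c - s⁻¹))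
      (le_max_left 1 (c + s⁻¹)),
    ← integral_add_adjacent_intervals (hI _ (c - s⁻¹)) (hI (c - s⁻¹) _),
    ← integral_add_adjacent_intervals (hI (c - s⁻¹) (c + s⁻¹)) (hI _ _), ← add_assoc]
  have hleft := hout (min (-1) (c - s⁻¹)) (c - s⁻¹) (min_le_right _ _) fun t ht => by
    rw [abs_sub_comm]; exact le_abs.2 (Or.inl (by linarith [ht.2]))
  have hright := hout (c + s⁻¹) (max 1 (c + s⁻¹)) (le_max_right _ _) fun t ht =>
    le_abs.2 (Or.inl (by linarith [ht.1]))
  have hmid : ‖∫ t in (c - s⁻¹)..(c + s⁻¹), quadChirp L A B t * φ t‖ ≤ 2 * M / s :=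
    (norm_intervalIntegral_quadChirp_mul_le hsupp hM _ _).trans_eq (by
      rw [show c + s⁻¹ - (c - s⁻¹) = 2 * s⁻¹ by ring, abs_of_pos (by positivity)]; ring)
  calc _ ≤ _ := norm_add₃_le
    _ ≤ 3 * M / s + 2 * M / s + 3 * M / s := by gcongr
    _ = 8 * M / s := by ring

end Regimes

lemma div_sqrt_le_mul_div_sqrt {M c x y : ℝ} (hM : 0 ≤ M) (hc : 0 ≤ c) (hx : 0 < x)
    (hy : 0 < y) (h : y ≤ c ^ 2 * x) : M / √x ≤ c * M / √y := by
  rw [div_le_div_iff₀ (sqrt_pos.2 hx) (sqrt_pos.2 hy)]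
  have : √y ≤ c * √x := by
    rw [← sqrt_sq hc, ← sqrt_mul (sq_nonneg c)]; exact sqrt_le_sqrt h
  calc M * √y ≤ M * (c * √x) := mul_le_mul_of_nonneg_left this hM
    _ = c * M * √x := by ring

/-- Degree-2 Stein–Wainger estimate: for `(A,B) ≠ (0,0)`, `λ > 0`, and `φ` a `C¹`
function supported in `[-1,1]`,
`|∫ e^{iλ(At²+Bt)} φ(t) dt| ≤ C (λ(|A|+|B|))^{-1/2} sup(|φ|+|φ'|)`. -/
theorem stmt17 : ∃ C : ℝ, 0 < C ∧
    ∀ L : ℝ, 0 < L → ∀ A B : ℝ, ¬(A = 0 ∧ B = 0) →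
    ∀ φ : ℝ → ℂ, ContDiff ℝ 1 φ → Function.support φ ⊆ Set.Icc (-1 : ℝ) 1 →
    ∀ M : ℝ, (∀ t ∈ Set.Icc (-1 : ℝ) 1, ‖φ t‖ + ‖deriv φ t‖ ≤ M) →
      ‖∫ t : ℝ, Complex.exp (Complex.I * (L : ℂ) * (((A * t ^ 2 + B * t : ℝ)) : ℂ)) * φ t‖
        ≤ C * (L * (|A| + |B|)) ^ (-(1 : ℝ) / 2) * M := by
  refine ⟨18, by norm_num, fun L hL A B hAB φ hφ hsupp M hM => ?_⟩
  have hM₀ : 0 ≤ M := (norm_nonneg _).trans (norm_le_of_support_subset_Icc hsupp hM 0)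
  have hΛ : 0 < L * (|A| + |B|) := by
    rcases not_and_or.1 hAB with h | h <;> positivity
  rw [neg_div, rpow_neg hΛ.le, ← sqrt_eq_rpow, mul_right_comm, ← div_eq_mul_inv]
  change ‖∫ t, quadChirp L A B t * φ t‖ ≤ _
  rcases lt_or_ge |B| (4 * |A|) with h | h
  · have hA : A ≠ 0 := by rintro rfl; linarith [abs_nonneg B, abs_zero (α := ℝ)]
    calc _ ≤ 8 * M / √(L * |A|) := norm_integral_quadChirp_mul_le_of_ne_zero hL hφ hsupp hM hA
      _ ≤ 9 / 4 * (8 * M) / √(L * (|A| + |B|)) :=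
          div_sqrt_le_mul_div_sqrt (by positivity) (by norm_num) (by positivity) hΛ (by nlinarith)
      _ = 18 * M / √(L * (|A| + |B|)) := by ring
  · have hB : B ≠ 0 := fun hB => hAB ⟨abs_nonpos_iff.1 (by simp [hB] at h; linarith), hB⟩
    calc _ ≤ 5 * M / √(L * |B|) :=
          norm_integral_quadChirp_mul_le_of_four_mul_abs_le hL hφ hsupp hM hB h
      _ ≤ 18 / 5 * (5 * M) / √(L * (|A| + |B|)) :=
          div_sqrt_le_mul_div_sqrt (by positivity) (by norm_num) (by positivity) hΛ (by nlinarith)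
      _ = 18 * M / √(L * (|A| + |B|)) := by ring
end
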